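/- arXiv:1003.5744 — 13 statements merged into one kernel-verified Lean document; each statement's English description precedes it below -/
import Mathlib

section
/- Let (X,φ) satisfy (R), (S) and the asymmetric triangle inequality with constant C ≥ 1, and let F : X → X be a map such that φ(F(x),F(y)) ≤ k·φ(x,y) for all x,y ∈ X, where 0 ≤ k < 1/C. Then for any x ∈ X the sequence of iterates (Fⁱ(x)) is Cauchy with respect to φ. If moreover (X,φ) is complete and strictly reflexive, then the limit of this sequence is the unique fixed point of F. -/
open Filter Topology

theorem stmt_0 {X : Type*} (φ : X → X → ℝ) (C : ℝ) (hC : 1 ≤ C)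
    (hR : ∀ x : X, φ x x = 0)
    (hS : ∀ x y : X, φ x y = φ y x)
    (hAT : ∀ x y z : X, φ x y ≤ φ x z + C * φ z y)
    (F : X → X) (k : ℝ) (hk0 : 0 ≤ k) (hkC : k < 1 / C)
    (hF : ∀ x y : X, φ (F x) (F y) ≤ k * φ x y) :
    (∀ x : X, ∀ ε > (0 : ℝ), ∃ N : ℕ, ∀ n ≥ N, ∀ m ≥ N, φ (F^[n] x) (F^[m] x) < ε) ∧
    ((∀ u : ℕ → X, (∀ ε > (0 : ℝ), ∃ N : ℕ, ∀ n ≥ N, ∀ m ≥ N, φ (u n) (u m) < ε) →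
        ∃ l : X, Tendsto (fun n => φ (u n) l) atTop (𝓝 0)) →
      (∀ x y : X, φ x y = 0 → x = y) →
      ∀ x : X, ∃ z : X, Tendsto (fun n => φ (F^[n] x) z) atTop (𝓝 0) ∧
        F z = z ∧ ∀ w : X, F w = w → w = z) := by
  have hC0 : (0:ℝ) < C := lt_of_lt_of_le one_pos hC
  have hpos : ∀ x y : X, 0 ≤ φ x y := by
    intro x y
    have h1 := hAT x x y
    have h2 := hS y x
    rw [hR x] at h1
    nlinarith
  have hCk : C * k < 1 := by
    have := (lt_div_iff₀ hC0).mp hkC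
    linarith
  have hk1 : k < 1 := lt_of_lt_of_le hkC (by rw [div_le_one hC0]; exact hC)
  have hiter : ∀ (n : ℕ) (x y : X), φ (F^[n] x) (F^[n] y) ≤ k ^ n * φ x y := by
    intro n
    induction n with
    | zero => intro x y; simp
    | succ n ih =>
      intro x y
      have h1 := hF (F^[n] x) (F^[n] y)
      have h2 := ih x y
      rw [Function.iterate_succ_apply' F n x, Function.iterate_succ_apply' F n y]
      calc φ (F (F^[n] x)) (F (F^[n] y)) ≤ k * φ (F^[n] x) (F^[n] y) := h1
        _ ≤ k * (k ^ n * φ x y) := by nlinarith [hpos (F^[n] x) (F^[n] y)]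
        _ = k ^ (n+1) * φ x y := by ring
  have hcauchy : ∀ x : X, ∀ ε > (0:ℝ), ∃ N : ℕ, ∀ n ≥ N, ∀ m ≥ N,
      φ (F^[n] x) (F^[m] x) < ε := by
    intro x ε hε
    set d := φ x (F x) with hd
    have hd0 : 0 ≤ d := hpos _ _
    set B := d / (1 - C * k) with hB
    have hB0 : 0 ≤ B := div_nonneg hd0 (by linarith)
    have hbnd : ∀ j : ℕ, φ x (F^[j] x) ≤ B := by
      intro j
      induction j with
      | zero => simpa [hR] using hB0
      | succ j ih =>
        have h1 := hAT x (F^[j+1] x) (F x)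
        have h2 : φ (F x) (F^[j+1] x) ≤ k * φ x (F^[j] x) := by
          rw [Function.iterate_succ_apply' F j x]
          exact hF x (F^[j] x)
        have h3 : k * φ x (F^[j] x) ≤ k * B := by nlinarith
        have hBeq : d + C * (k * B) = B := by
          have hne : 1 - C * k ≠ 0 := by intro h; nlinarith
          rw [hB]
          field_simp
          ring
        calc φ x (F^[j+1] x) ≤ d + C * φ (F x) (F^[j+1] x) := h1
          _ ≤ d + C * (k * B) := by nlinarith
          _ = B := hBeq
    have key : ∀ n m : ℕ, n ≤ m → φ (F^[n] x) (F^[m] x) ≤ k ^ n * B := by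
      intro n m hnm
      have hm : F^[m] x = F^[n] (F^[m-n] x) := by
        rw [← Function.iterate_add_apply]
        congr 1
        omega
      rw [hm]
      calc φ (F^[n] x) (F^[n] (F^[m-n] x)) ≤ k ^ n * φ x (F^[m-n] x) := hiter n x _
        _ ≤ k ^ n * B := by nlinarith [pow_nonneg hk0 n, hbnd (m - n)]
    obtain ⟨N, hN⟩ := exists_pow_lt_of_lt_one (show (0:ℝ) < ε / (B+1) by positivity) hk1
    have hNk : k ^ N * (B + 1) < ε := (lt_div_iff₀ (by linarith)).mp hN
    have final : ∀ n m : ℕ, N ≤ n → n ≤ m → φ (F^[n] x) (F^[m] x) < ε := by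
      intro n m hn hnm
      have h1 := key n m hnm
      have h2 : k ^ n ≤ k ^ N := pow_le_pow_of_le_one hk0 hk1.le hn
      nlinarith [pow_nonneg hk0 n, pow_nonneg hk0 N]
    refine ⟨N, fun n hn m hm => ?_⟩
    rcases le_total n m with h | h
    · exact final n m hn h
    · rw [hS]; exact final m n hm h
  refine ⟨hcauchy, ?_⟩
  intro hcomp hsr x
  obtain ⟨z, hz⟩ := hcomp (fun n => F^[n] x) (hcauchy x)
  have hz' : Tendsto (fun n => φ (F^[n+1] x) z) atTop (𝓝 0) :=
    hz.comp (tendsto_add_atTop_nat 1)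
  have hFz : F z = z := by
    have hg : Tendsto (fun n => k * φ (F^[n] x) z + C * φ (F^[n+1] x) z) atTop (𝓝 0) := by
      have := (hz.const_mul k).add (hz'.const_mul C)
      simpa using this
    have hle : ∀ n : ℕ, φ (F z) z ≤ k * φ (F^[n] x) z + C * φ (F^[n+1] x) z := by
      intro n
      have h1 := hAT (F z) z (F^[n+1] x)
      have h2 : φ (F z) (F^[n+1] x) ≤ k * φ z (F^[n] x) := by
        rw [Function.iterate_succ_apply' F n x]
        exact hF z (F^[n] x)
      rw [hS z (F^[n] x)] at h2
      linarith
    have h0 : φ (F z) z ≤ 0 := ge_of_tendsto' hg hle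
    exact hsr _ _ (le_antisymm h0 (hpos _ _))
  refine ⟨z, hz, hFz, fun w hw => ?_⟩
  have h1 := hF w z
  rw [hw, hFz] at h1
  have h2 : φ w z = 0 := by nlinarith [hpos w z]
  exact hsr w z h2
end

section
/- Let X be a set, φ : X × X → ℝ≥0 a symmetric function with φ(x,y) = 0 if and only if x = y, and ψ : X × X × X → ℝ a function bounded above and below, satisfying the triangle inequality with multiplicative cost: φ(x,y) ≤ (φ(x,z) + φ(z,y))·e^{ψ(x,y,z)} for all x,y,z. Let 0 ≤ k < 1 and let F : X → X be a map such that φ(F(x),F(y)) ≤ k·φ(x,y) for all x,y, and ψ(F(x),F(y),F(z)) ≤ k·ψ(x,y,z) whenever both sides are positive. Then for any x ∈ X the sequence of iterates (Fⁱ(x)) is Cauchy with respect to φ, and if (X,φ) is complete, the limit of this sequence is the unique fixed point of F. -/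
/-!
Bounding `ψ` by `M` turns the multiplicative triangle inequality into the relaxed one
`φ x y ≤ K (φ x z + φ z y)` with `K = exp M`, so `φ` is a `b`-metric and `F` a contraction for it.
The usual geometric series argument fails when `k K ≥ 1`, so one first shows that orbits are
bounded: choosing `P` with `K kᴾ ≤ 1/2` and splitting `φ(x, Fⁿx)` at `Fᴾx` gives
`φ(x, Fⁿx) ≤ K C + φ(x, Fⁿ⁻ᴾx) / 2` with `C = max_{j ≤ P} φ(x, Fʲx)`, and strong induction
yields a bound `B`. Then
`φ(Fⁿx, Fᵐx) ≤ k^min(n,m) B`, so the orbit is Cauchy; its limit is fixed since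
`φ(Fz, z) ≤ K (k φ(Fⁿx, z) + φ(Fⁿ⁺¹x, z)) → 0`, and contractivity makes fixed points unique.
-/

open Filter Topology Function

section RelaxedContraction

variable {X : Type*} {φ : X → X → ℝ} {F : X → X} {k K : ℝ}

theorem iterate_le_pow_mul (hk0 : 0 ≤ k) (hF : ∀ x y, φ (F x) (F y) ≤ k * φ x y) (n : ℕ)
    (x y : X) : φ (F^[n] x) (F^[n] y) ≤ k ^ n * φ x y := by
  induction n generalizing x y with
  | zero => simp
  | succ n ih =>
    rw [iterate_succ_apply, iterate_succ_apply, pow_succ, mul_assoc]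
    exact (ih _ _).trans (mul_le_mul_of_nonneg_left (hF x y) (pow_nonneg hk0 n))

theorem exists_forall_dist_orbit_le (hφ0 : ∀ x y, 0 ≤ φ x y)
    (hK : ∀ x y z, φ x y ≤ K * (φ x z + φ z y)) (hK0 : 0 ≤ K) (hk0 : 0 ≤ k) (hk1 : k < 1)
    (hF : ∀ x y, φ (F x) (F y) ≤ k * φ x y) (x : X) :
    ∃ B, ∀ n, φ x (F^[n] x) ≤ B := by
  have hsmall : Tendsto (fun n => K * k ^ n) atTop (𝓝 0) := by
    simpa using (tendsto_pow_atTop_nhds_zero_of_lt_one hk0 hk1).const_mul K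
  obtain ⟨P, hP, hP0⟩ :=
    ((hsmall.eventually (gt_mem_nhds one_half_pos)).and (eventually_gt_atTop 0)).exists
  obtain ⟨C, hC⟩ := ((Set.finite_Iic P).image fun j => φ x (F^[j] x)).bddAbove
  have hCle : ∀ j ≤ P, φ x (F^[j] x) ≤ C := fun j hj => hC (Set.mem_image_of_mem _ hj)
  have hC0 : 0 ≤ C := (hφ0 _ _).trans (hCle 0 P.zero_le)
  refine ⟨2 * K * C + C, fun n => ?_⟩
  induction n using Nat.strong_induction_on with
  | _ n ih =>
    rcases le_or_gt n P with hn | hn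
    · nlinarith [hCle n hn]
    have htail : φ (F^[P] x) (F^[n] x) ≤ k ^ P * (2 * K * C + C) := by
      obtain ⟨p, rfl⟩ := Nat.exists_eq_add_of_le hn.le
      rw [iterate_add_apply]
      exact (iterate_le_pow_mul hk0 hF P x _).trans
        (mul_le_mul_of_nonneg_left (ih p (by omega)) (pow_nonneg hk0 P))
    calc φ x (F^[n] x) ≤ K * (φ x (F^[P] x) + φ (F^[P] x) (F^[n] x)) := hK _ _ _
      _ ≤ K * (C + k ^ P * (2 * K * C + C)) := by gcongr; exact hCle P le_rfl
      _ = K * C + K * k ^ P * (2 * K * C + C) := by ring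
      _ ≤ K * C + 1 / 2 * (2 * K * C + C) := by gcongr
      _ ≤ 2 * K * C + C := by nlinarith

theorem dist_iterate_iterate_le (hS : ∀ x y, φ x y = φ y x) (hk0 : 0 ≤ k)
    (hF : ∀ x y, φ (F x) (F y) ≤ k * φ x y) {x : X} {B : ℝ} (hB : ∀ n, φ x (F^[n] x) ≤ B)
    (n m : ℕ) : φ (F^[n] x) (F^[m] x) ≤ k ^ min n m * B := by
  wlog hnm : n ≤ m generalizing n m
  · rw [hS, min_comm]
    exact this m n (le_of_not_ge hnm)
  obtain ⟨p, rfl⟩ := Nat.exists_eq_add_of_le hnm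
  rw [min_eq_left hnm, iterate_add_apply]
  exact (iterate_le_pow_mul hk0 hF n x _).trans
    (mul_le_mul_of_nonneg_left (hB p) (pow_nonneg hk0 n))

theorem orbit_cauchy (hφ0 : ∀ x y, 0 ≤ φ x y) (hS : ∀ x y, φ x y = φ y x)
    (hK : ∀ x y z, φ x y ≤ K * (φ x z + φ z y)) (hK0 : 0 ≤ K) (hk0 : 0 ≤ k) (hk1 : k < 1)
    (hF : ∀ x y, φ (F x) (F y) ≤ k * φ x y) (x : X) :
    ∀ ε > (0 : ℝ), ∃ N : ℕ, ∀ n ≥ N, ∀ m ≥ N, φ (F^[n] x) (F^[m] x) < ε := by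
  intro ε hε
  obtain ⟨B, hB⟩ := exists_forall_dist_orbit_le hφ0 hK hK0 hk0 hk1 hF x
  have hB0 : 0 ≤ B := (hφ0 _ _).trans (hB 0)
  have hsmall : Tendsto (fun n => k ^ n * B) atTop (𝓝 0) := by
    simpa using (tendsto_pow_atTop_nhds_zero_of_lt_one hk0 hk1).mul_const B
  obtain ⟨N, hN⟩ := (hsmall.eventually (gt_mem_nhds hε)).exists
  refine ⟨N, fun n hn m hm => ?_⟩
  calc φ (F^[n] x) (F^[m] x) ≤ k ^ min n m * B := dist_iterate_iterate_le hS hk0 hF hB n m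
    _ ≤ k ^ N * B :=
      mul_le_mul_of_nonneg_right (pow_le_pow_of_le_one hk0 hk1.le (le_min hn hm)) hB0
    _ < ε := hN

theorem isFixedPt_of_tendsto_orbit (hφ0 : ∀ x y, 0 ≤ φ x y) (hS : ∀ x y, φ x y = φ y x)
    (hsep : ∀ x y, φ x y = 0 ↔ x = y) (hK : ∀ x y z, φ x y ≤ K * (φ x z + φ z y))
    (hK0 : 0 ≤ K) (hF : ∀ x y, φ (F x) (F y) ≤ k * φ x y) {x z : X}
    (hz : Tendsto (fun n => φ (F^[n] x) z) atTop (𝓝 0)) : IsFixedPt F z := by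
  have hbound : ∀ n, φ (F z) z ≤ K * (k * φ (F^[n] x) z + φ (F^[n + 1] x) z) := fun n =>
    calc φ (F z) z ≤ K * (φ (F z) (F^[n + 1] x) + φ (F^[n + 1] x) z) := hK _ _ _
      _ ≤ K * (k * φ (F^[n] x) z + φ (F^[n + 1] x) z) := by
        rw [iterate_succ_apply', hS (F^[n] x)]
        gcongr
        exact hF _ _
  have hlim : Tendsto (fun n => K * (k * φ (F^[n] x) z + φ (F^[n + 1] x) z)) atTop (𝓝 0) := by
    simpa using ((hz.const_mul k).add (hz.comp (tendsto_add_atTop_nat 1))).const_mul K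
  exact (hsep _ _).1 (le_antisymm (ge_of_tendsto' hlim hbound) (hφ0 _ _))

theorem eq_of_isFixedPt_of_contract (hφ0 : ∀ x y, 0 ≤ φ x y) (hsep : ∀ x y, φ x y = 0 ↔ x = y)
    (hk1 : k < 1) (hF : ∀ x y, φ (F x) (F y) ≤ k * φ x y) {w z : X} (hw : IsFixedPt F w)
    (hz : IsFixedPt F z) : w = z := by
  have h : φ w z ≤ k * φ w z := by simpa only [hw.eq, hz.eq] using hF w z
  exact (hsep w z).1 (by nlinarith [hφ0 w z])

end RelaxedContraction

theorem stmt_2_general {X : Type*} (φ : X → X → ℝ) (ψ : X → X → X → ℝ)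
    (hφ0 : ∀ x y : X, 0 ≤ φ x y)
    (hS : ∀ x y : X, φ x y = φ y x)
    (hsep : ∀ x y : X, φ x y = 0 ↔ x = y)
    (M : ℝ) (hψbdd : ∀ x y z : X, |ψ x y z| ≤ M)
    (htri : ∀ x y z : X, φ x y ≤ (φ x z + φ z y) * Real.exp (ψ x y z))
    (F : X → X) (k : ℝ) (hk0 : 0 ≤ k) (hk1 : k < 1)
    (hFφ : ∀ x y : X, φ (F x) (F y) ≤ k * φ x y) :
    (∀ x : X, ∀ ε > (0 : ℝ), ∃ N : ℕ, ∀ n ≥ N, ∀ m ≥ N, φ (F^[n] x) (F^[m] x) < ε) ∧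
    ((∀ u : ℕ → X, (∀ ε > (0 : ℝ), ∃ N : ℕ, ∀ n ≥ N, ∀ m ≥ N, φ (u n) (u m) < ε) →
        ∃ l : X, Tendsto (fun n => φ (u n) l) atTop (𝓝 0)) →
      ∀ x : X, ∃ z : X, Tendsto (fun n => φ (F^[n] x) z) atTop (𝓝 0) ∧
        F z = z ∧ ∀ w : X, F w = w → w = z) := by
  have hK : ∀ x y z, φ x y ≤ Real.exp M * (φ x z + φ z y) := fun x y z =>
    (htri x y z).trans <| by
      rw [mul_comm]
      gcongr
      exacts [add_nonneg (hφ0 _ _) (hφ0 _ _), (le_abs_self _).trans (hψbdd x y z)]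
  have hK0 := (Real.exp_pos M).le
  have hcauchy := orbit_cauchy hφ0 hS hK hK0 hk0 hk1 hFφ
  refine ⟨hcauchy, fun hcomplete x => ?_⟩
  obtain ⟨z, hz⟩ := hcomplete _ (hcauchy x)
  have hFz := isFixedPt_of_tendsto_orbit hφ0 hS hsep hK hK0 hFφ hz
  exact ⟨z, hz, hFz, fun w hw => eq_of_isFixedPt_of_contract hφ0 hsep hk1 hFφ hw hFz⟩

theorem stmt_2 {X : Type*} (φ : X → X → ℝ) (ψ : X → X → X → ℝ)
    (hφ0 : ∀ x y : X, 0 ≤ φ x y)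
    (hS : ∀ x y : X, φ x y = φ y x)
    (hsep : ∀ x y : X, φ x y = 0 ↔ x = y)
    (M : ℝ) (hψbdd : ∀ x y z : X, |ψ x y z| ≤ M)
    (htri : ∀ x y z : X, φ x y ≤ (φ x z + φ z y) * Real.exp (ψ x y z))
    (F : X → X) (k : ℝ) (hk0 : 0 ≤ k) (hk1 : k < 1)
    (hFφ : ∀ x y : X, φ (F x) (F y) ≤ k * φ x y)
    (hFψ : ∀ x y z : X, 0 < ψ (F x) (F y) (F z) → 0 < k * ψ x y z →
        ψ (F x) (F y) (F z) ≤ k * ψ x y z) :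
    (∀ x : X, ∀ ε > (0 : ℝ), ∃ N : ℕ, ∀ n ≥ N, ∀ m ≥ N, φ (F^[n] x) (F^[m] x) < ε) ∧
    ((∀ u : ℕ → X, (∀ ε > (0 : ℝ), ∃ N : ℕ, ∀ n ≥ N, ∀ m ≥ N, φ (u n) (u m) < ε) →
        ∃ l : X, Tendsto (fun n => φ (u n) l) atTop (𝓝 0)) →
      ∀ x : X, ∃ z : X, Tendsto (fun n => φ (F^[n] x) z) atTop (𝓝 0) ∧
        F z = z ∧ ∀ w : X, F w = w → w = z) :=
  stmt_2_general φ ψ hφ0 hS hsep M hψbdd htri F k hk0 hk1 hFφ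
end

section
/- Let X be a set with d : X × X × X → ℝ satisfying (Sym), (Tetr), (Z) and (B), with associated distance φ. Then for all x,y,z ∈ X: (i) φ(x,y) ≤ φ(x,z) + φ(z,y) + d(x,y,z) (triangle inequality with cost); (ii) φ(x,y) ≤ φ(x,z) + φ(z,y) + min(φ(x,z), φ(z,y)); and hence (iii) the asymmetric triangle inequality φ(x,y) ≤ φ(x,z) + 2·φ(z,y). -/
/-!
Apply the tetrahedral inequality to `x, y, w` with the vertex `z`:
`d(x,y,w) ≤ d(x,y,z) + d(y,w,z) + d(x,w,z)`, where the last two terms are values of `d` with the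
pairs `{z,y}` and `{x,z}` fixed, hence at most `φ(z,y)` and `φ(x,z)`. Taking the supremum over `w`
gives (i). By symmetry `d(x,y,z)` is itself bounded by both `φ(x,z)` and `φ(z,y)`, which gives
(ii) and (iii).
-/

section TwoMetric

variable {X : Type*} {d : X → X → X → ℝ} {φ : X → X → ℝ}

lemma d_rotate (hSym₁ : ∀ x y z : X, d x y z = d y x z) (hSym₂ : ∀ x y z : X, d x y z = d x z y)
    (x y z : X) : d x y z = d z x y := by
  rw [hSym₁, hSym₂, hSym₁, hSym₂]

lemma d_le_phi (hφ : ∀ x y : X, IsLUB (Set.range fun z => d x y z) (φ x y)) (x y z : X) :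
    d x y z ≤ φ x y :=
  (hφ x y).1 ⟨z, rfl⟩

lemma phi_le_add_add_d (hSym₁ : ∀ x y z : X, d x y z = d y x z)
    (hSym₂ : ∀ x y z : X, d x y z = d x z y)
    (hTetr : ∀ a b c x : X, d a b c ≤ d a b x + d b c x + d a c x)
    (hφ : ∀ x y : X, IsLUB (Set.range fun z => d x y z) (φ x y)) (x y z : X) :
    φ x y ≤ φ x z + φ z y + d x y z := by
  refine (hφ x y).2 ?_
  rintro _ ⟨w, rfl⟩
  have hzy : d y w z ≤ φ z y := d_rotate hSym₁ hSym₂ y w z ▸ d_le_phi hφ z y w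
  have hxz : d x w z ≤ φ x z := hSym₂ x w z ▸ d_le_phi hφ x z w
  linarith [hTetr x y w z]

lemma d_le_min_phi (hSym₁ : ∀ x y z : X, d x y z = d y x z)
    (hSym₂ : ∀ x y z : X, d x y z = d x z y)
    (hφ : ∀ x y : X, IsLUB (Set.range fun z => d x y z) (φ x y)) (x y z : X) :
    d x y z ≤ min (φ x z) (φ z y) := by
  refine le_min ?_ ?_
  · rw [hSym₂]
    exact d_le_phi hφ x z y
  · rw [d_rotate hSym₁ hSym₂, hSym₂]
    exact d_le_phi hφ z y x

lemma phi_le_add_add_min (hSym₁ : ∀ x y z : X, d x y z = d y x z)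
    (hSym₂ : ∀ x y z : X, d x y z = d x z y)
    (hTetr : ∀ a b c x : X, d a b c ≤ d a b x + d b c x + d a c x)
    (hφ : ∀ x y : X, IsLUB (Set.range fun z => d x y z) (φ x y)) (x y z : X) :
    φ x y ≤ φ x z + φ z y + min (φ x z) (φ z y) := by
  linarith [phi_le_add_add_d hSym₁ hSym₂ hTetr hφ x y z, d_le_min_phi hSym₁ hSym₂ hφ x y z]

lemma phi_le_add_two_mul (hSym₁ : ∀ x y z : X, d x y z = d y x z)
    (hSym₂ : ∀ x y z : X, d x y z = d x z y)
    (hTetr : ∀ a b c x : X, d a b c ≤ d a b x + d b c x + d a c x)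
    (hφ : ∀ x y : X, IsLUB (Set.range fun z => d x y z) (φ x y)) (x y z : X) :
    φ x y ≤ φ x z + 2 * φ z y := by
  linarith [phi_le_add_add_min hSym₁ hSym₂ hTetr hφ x y z, min_le_right (φ x z) (φ z y)]

end TwoMetric

theorem stmt_4_general {X : Type*} (d : X → X → X → ℝ) (φ : X → X → ℝ)
    (hSym₁ : ∀ x y z : X, d x y z = d y x z)
    (hSym₂ : ∀ x y z : X, d x y z = d x z y)
    (hTetr : ∀ a b c x : X, d a b c ≤ d a b x + d b c x + d a c x)
    (hφ : ∀ x y : X, IsLUB (Set.range fun z => d x y z) (φ x y)) :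
    (∀ x y z : X, φ x y ≤ φ x z + φ z y + d x y z) ∧
    (∀ x y z : X, φ x y ≤ φ x z + φ z y + min (φ x z) (φ z y)) ∧
    (∀ x y z : X, φ x y ≤ φ x z + 2 * φ z y) :=
  ⟨phi_le_add_add_d hSym₁ hSym₂ hTetr hφ, phi_le_add_add_min hSym₁ hSym₂ hTetr hφ,
    phi_le_add_two_mul hSym₁ hSym₂ hTetr hφ⟩

theorem stmt_4 {X : Type*} (d : X → X → X → ℝ) (φ : X → X → ℝ)
    (hSym₁ : ∀ x y z : X, d x y z = d y x z)
    (hSym₂ : ∀ x y z : X, d x y z = d x z y)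
    (hTetr : ∀ a b c x : X, d a b c ≤ d a b x + d b c x + d a c x)
    (hZ : ∀ a b : X, d a b b = 0)
    (hB : ∀ x y z : X, d x y z ≤ 1)
    (hφ : ∀ x y : X, IsLUB (Set.range fun z => d x y z) (φ x y)) :
    (∀ x y z : X, φ x y ≤ φ x z + φ z y + d x y z) ∧
    (∀ x y z : X, φ x y ≤ φ x z + φ z y + min (φ x z) (φ z y)) ∧
    (∀ x y z : X, φ x y ≤ φ x z + 2 * φ z y) :=
  stmt_4_general d φ hSym₁ hSym₂ hTetr hφ
end

section
/- Let X be a set with d : X × X × X → ℝ satisfying (Sym), (Tetr), (Z), (N) and (B), with associated distance φ, and suppose X has at least two distinct points. Let F : X → X be a surjective map such that d(F(x),F(y),F(z)) ≤ k·d(x,y,z) for all x,y,z, where k > 0. Then φ(F(x),F(y)) ≤ k·φ(x,y) for all x,y, and necessarily k ≥ 1. -/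
/-!
The bound on `φ` holds because every point is an image `F w`, so each `d (F x) (F y) (F w)` is
at most `k * d x y w ≤ k * φ x y`. If `k < 1`, surjectivity lets the contraction be iterated:
every value of `d` is at most `k ^ n` for all `n`, hence `d ≤ 0`; since `d ≥ 0` follows from
(Sym), (Tetr) and (Z), `d` vanishes identically, contradicting (N) for two distinct points.
-/

open Filter Topology

section TwoMetric

variable {X : Type*} {d : X → X → X → ℝ}

theorem nonneg_of_tetrahedral (hSym₁ : ∀ x y z : X, d x y z = d y x z)
    (hTetr : ∀ a b c x : X, d a b c ≤ d a b x + d b c x + d a c x)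
    (hZ : ∀ a b : X, d a b b = 0) (a b c : X) : 0 ≤ d a b c := by
  have hbbc : d b b c ≤ 0 := by
    have := hTetr b b c b
    rw [hZ b b, hSym₁ b c b, hZ c b] at this
    linarith
  have := hTetr a b b c
  rw [hZ a b] at this
  linarith

theorem le_pow_of_surjective_of_le_mul (hB : ∀ x y z : X, d x y z ≤ 1)
    {F : X → X} (hFsurj : Function.Surjective F) {k : ℝ} (hk : 0 ≤ k)
    (hF : ∀ x y z : X, d (F x) (F y) (F z) ≤ k * d x y z) (n : ℕ) (a b c : X) :
    d a b c ≤ k ^ n := by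
  induction n generalizing a b c with
  | zero => simpa using hB a b c
  | succ n ih =>
    obtain ⟨a', rfl⟩ := hFsurj a
    obtain ⟨b', rfl⟩ := hFsurj b
    obtain ⟨c', rfl⟩ := hFsurj c
    calc d (F a') (F b') (F c') ≤ k * d a' b' c' := hF a' b' c'
      _ ≤ k * k ^ n := mul_le_mul_of_nonneg_left (ih a' b' c') hk
      _ = k ^ (n + 1) := (pow_succ' k n).symm

theorem one_le_of_surjective_of_le_mul (hB : ∀ x y z : X, d x y z ≤ 1)
    {F : X → X} (hFsurj : Function.Surjective F) {k : ℝ} (hk : 0 ≤ k)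
    (hF : ∀ x y z : X, d (F x) (F y) (F z) ≤ k * d x y z) {a b c : X} (hpos : 0 < d a b c) :
    1 ≤ k := by
  by_contra! hk1
  have hlim : Tendsto (fun n : ℕ => k ^ n) atTop (𝓝 0) :=
    tendsto_pow_atTop_nhds_zero_of_lt_one hk hk1
  have : d a b c ≤ 0 :=
    ge_of_tendsto' hlim fun n => le_pow_of_surjective_of_le_mul hB hFsurj hk hF n a b c
  linarith

end TwoMetric

theorem IsLUB.le_mul_of_surjective {α β : Type*} {f : α → ℝ} {g : β → ℝ} {a b k : ℝ}
    (ha : IsLUB (Set.range f) a) (hb : IsLUB (Set.range g) b) {F : β → α}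
    (hFsurj : Function.Surjective F) (hk : 0 ≤ k) (hfg : ∀ w, f (F w) ≤ k * g w) :
    a ≤ k * b := by
  refine ha.2 ?_
  rintro _ ⟨z, rfl⟩
  obtain ⟨w, rfl⟩ := hFsurj z
  exact (hfg w).trans (mul_le_mul_of_nonneg_left (hb.1 ⟨w, rfl⟩) hk)

theorem stmt_6_general {X : Type*} (d : X → X → X → ℝ) (φ : X → X → ℝ)
    (hSym₁ : ∀ x y z : X, d x y z = d y x z)
    (hTetr : ∀ a b c x : X, d a b c ≤ d a b x + d b c x + d a c x)
    (hZ : ∀ a b : X, d a b b = 0)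
    (hN : ∀ a b : X, a ≠ b → ∃ c : X, d a b c ≠ 0)
    (hB : ∀ x y z : X, d x y z ≤ 1)
    (hφ : ∀ x y : X, IsLUB (Set.range fun z => d x y z) (φ x y))
    (htwo : ∃ x y : X, x ≠ y)
    (F : X → X) (hFsurj : Function.Surjective F)
    (k : ℝ) (hk : 0 < k)
    (hF : ∀ x y z : X, d (F x) (F y) (F z) ≤ k * d x y z) :
    (∀ x y : X, φ (F x) (F y) ≤ k * φ x y) ∧ 1 ≤ k := by
  refine ⟨fun x y => (hφ (F x) (F y)).le_mul_of_surjective (hφ x y) hFsurj hk.le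
    fun w => hF x y w, ?_⟩
  obtain ⟨a, b, hab⟩ := htwo
  obtain ⟨c, hc⟩ := hN a b hab
  have hpos : 0 < d a b c :=
    (nonneg_of_tetrahedral hSym₁ hTetr hZ a b c).lt_of_ne' hc
  exact one_le_of_surjective_of_le_mul hB hFsurj hk.le hF hpos

theorem stmt_6 {X : Type*} (d : X → X → X → ℝ) (φ : X → X → ℝ)
    (hSym₁ : ∀ x y z : X, d x y z = d y x z)
    (hSym₂ : ∀ x y z : X, d x y z = d x z y)
    (hTetr : ∀ a b c x : X, d a b c ≤ d a b x + d b c x + d a c x)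
    (hZ : ∀ a b : X, d a b b = 0)
    (hN : ∀ a b : X, a ≠ b → ∃ c : X, d a b c ≠ 0)
    (hB : ∀ x y z : X, d x y z ≤ 1)
    (hφ : ∀ x y : X, IsLUB (Set.range fun z => d x y z) (φ x y))
    (htwo : ∃ x y : X, x ≠ y)
    (F : X → X) (hFsurj : Function.Surjective F)
    (k : ℝ) (hk : 0 < k)
    (hF : ∀ x y z : X, d (F x) (F y) (F z) ≤ k * d x y z) :
    (∀ x y : X, φ (F x) (F y) ≤ k * φ x y) ∧ 1 ≤ k :=
  stmt_6_general d φ hSym₁ hTetr hZ hN hB hφ htwo F hFsurj k hk hF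
end

section
/- Let X be a set with d : X × X × X → ℝ satisfying (Sym), (Tetr), (Z), (N), (B) and (Trans). If x,y,z are colinear, y,z,w are colinear, and y ≠ z, then x,y,w are colinear and x,z,w are colinear. -/
open Filter Topology

/-
Nonnegativity of `d` follows from (Tetr) and (Z). Pick `c` with `d y z c > 0` by (N); then
(Trans) gives `d x w y * d c y z ≤ d x y z + d w y z = 0`, so `x, y, w` are colinear. Finally
(Tetr) with apex `y` bounds `d x z w` by `d x z y + d z w y + d x w y = 0`.
-/

section TwoMetric

variable {X : Type*} {d : X → X → X → ℝ}

theorem nonneg_of_tetr_of_zero (hSym₁ : ∀ x y z : X, d x y z = d y x z)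
    (hSym₂ : ∀ x y z : X, d x y z = d x z y)
    (hTetr : ∀ a b c x : X, d a b c ≤ d a b x + d b c x + d a c x)
    (hZ : ∀ a b : X, d a b b = 0) (a b t : X) : 0 ≤ d a b t := by
  have hbbt : d b b t = 0 := by rw [hSym₂, hSym₁, hZ]
  linarith [hTetr a b b t, hZ a b]

theorem eq_zero_of_trans (hnn : ∀ a b t : X, 0 ≤ d a b t)
    (hTrans : ∀ a b c x y : X, d a b x * d c x y ≤ d a x y + d b x y) {a b c x y : X}
    (hc : 0 < d c x y) (ha : d a x y = 0) (hb : d b x y = 0) : d a b x = 0 := by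
  have h := hTrans a b c x y
  rw [ha, hb, add_zero] at h
  exact le_antisymm (nonpos_of_mul_nonpos_left h hc) (hnn a b x)

theorem eq_zero_of_tetr (hnn : ∀ a b t : X, 0 ≤ d a b t)
    (hTetr : ∀ a b c x : X, d a b c ≤ d a b x + d b c x + d a c x) {a b c x : X}
    (hab : d a b x = 0) (hbc : d b c x = 0) (hac : d a c x = 0) : d a b c = 0 := by
  linarith [hTetr a b c x, hnn a b c]

end TwoMetric

theorem stmt_7_general {X : Type*} (d : X → X → X → ℝ)
    (hSym₁ : ∀ x y z : X, d x y z = d y x z)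
    (hSym₂ : ∀ x y z : X, d x y z = d x z y)
    (hTetr : ∀ a b c x : X, d a b c ≤ d a b x + d b c x + d a c x)
    (hZ : ∀ a b : X, d a b b = 0)
    (hN : ∀ a b : X, a ≠ b → ∃ c : X, d a b c ≠ 0)
    (hTrans : ∀ a b c x y : X, d a b x * d c x y ≤ d a x y + d b x y)
    (x y z w : X) (hxyz : d x y z = 0) (hyzw : d y z w = 0) (hyz : y ≠ z) :
    d x y w = 0 ∧ d x z w = 0 := by
  have hnn := nonneg_of_tetr_of_zero hSym₁ hSym₂ hTetr hZ
  obtain ⟨c, hc⟩ := hN y z hyz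
  have hcyz : 0 < d c y z := by
    rw [hSym₁, hSym₂]
    exact (hnn y z c).lt_of_ne' hc
  have hwyz : d w y z = 0 := by rw [hSym₁, hSym₂]; exact hyzw
  have hxwy := eq_zero_of_trans hnn hTrans hcyz hxyz hwyz
  have hxyw : d x y w = 0 := by rw [hSym₂]; exact hxwy
  refine ⟨hxyw, eq_zero_of_tetr hnn hTetr ?_ ?_ hxwy⟩
  · rw [hSym₂]; exact hxyz
  · rw [hSym₂, hSym₁]; exact hyzw

theorem stmt_7 {X : Type*} (d : X → X → X → ℝ)
    (hSym₁ : ∀ x y z : X, d x y z = d y x z)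
    (hSym₂ : ∀ x y z : X, d x y z = d x z y)
    (hTetr : ∀ a b c x : X, d a b c ≤ d a b x + d b c x + d a c x)
    (hZ : ∀ a b : X, d a b b = 0)
    (hN : ∀ a b : X, a ≠ b → ∃ c : X, d a b c ≠ 0)
    (hB : ∀ x y z : X, d x y z ≤ 1)
    (hTrans : ∀ a b c x y : X, d a b x * d c x y ≤ d a x y + d b x y)
    (x y z w : X) (hxyz : d x y z = 0) (hyzw : d y z w = 0) (hyz : y ≠ z) :
    d x y w = 0 ∧ d x z w = 0 :=
  stmt_7_general d hSym₁ hSym₂ hTetr hZ hN hTrans x y z w hxyz hyzw hyz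
end

section
/- Let X be a set with d : X × X × X → ℝ satisfying (Sym), (Tetr), (Z), (N), (B) and (Trans). If x ≠ y are two points of X, then there is a unique line Y containing both x and y, and Y is exactly the set of points a ∈ X with d(a,x,y) = 0. -/
/-!
Let `L = {a | d(a,x,y) = 0}`. By (N) some `c` has `d(c,x,y) > 0`, so (Trans) gives
`d(a,b,x) · d(c,x,y) ≤ d(a,x,y) + d(b,x,y) = 0` for `a, b ∈ L`: any two points of `L` are colinear
with `x`, and symmetrically with `y`. For a third point `r ∈ L`, `r ≠ y`, the same argument applied
to the pair `(r, y)` shows `d(p,q,r) = 0`, so `L` is colinear. Every colinear set containing `x` and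
`y` lies in `L`, hence `L` is maximal and is the only line through `x` and `y`.
-/

section

variable {X : Type*}

structure IsTwoMetric (d : X → X → X → ℝ) : Prop where
  symm₁ : ∀ x y z, d x y z = d y x z
  symm₂ : ∀ x y z, d x y z = d x z y
  tetr : ∀ a b c x, d a b c ≤ d a b x + d b c x + d a c x
  zero : ∀ a b, d a b b = 0

def IsColinearSet (d : X → X → X → ℝ) (Y : Set X) : Prop :=
  ∀ p ∈ Y, ∀ q ∈ Y, ∀ r ∈ Y, d p q r = 0

def IsLine (d : X → X → X → ℝ) (Y : Set X) : Prop :=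
  IsColinearSet d Y ∧ ∀ Z : Set X, Y ⊆ Z → IsColinearSet d Z → Z = Y

def lineThrough (d : X → X → X → ℝ) (x y : X) : Set X :=
  {a | d a x y = 0}

namespace IsTwoMetric

variable {d : X → X → X → ℝ}

theorem nonneg (hd : IsTwoMetric d) (a b c : X) : 0 ≤ d a b c := by
  have h := hd.tetr a b b c
  rw [hd.zero a b, hd.symm₂ b b c, hd.symm₁ b c b, hd.zero] at h
  linarith

theorem mem_lineThrough_left (hd : IsTwoMetric d) (x y : X) : x ∈ lineThrough d x y := by
  change d x x y = 0
  rw [hd.symm₂, hd.symm₁, hd.zero]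

theorem mem_lineThrough_right (hd : IsTwoMetric d) (x y : X) : y ∈ lineThrough d x y := by
  change d y x y = 0
  rw [hd.symm₁, hd.zero]

theorem lineThrough_comm (hd : IsTwoMetric d) (x y : X) : lineThrough d x y = lineThrough d y x :=
  Set.ext fun a => by
    change d a x y = 0 ↔ d a y x = 0
    rw [hd.symm₂]

theorem eq_zero_of_mem_lineThrough (hd : IsTwoMetric d)
    (hN : ∀ a b : X, a ≠ b → ∃ c : X, d a b c ≠ 0)
    (hTrans : ∀ a b c x y : X, d a b x * d c x y ≤ d a x y + d b x y)
    {x y a b : X} (hxy : x ≠ y) (ha : a ∈ lineThrough d x y) (hb : b ∈ lineThrough d x y) :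
    d a b x = 0 := by
  obtain ⟨c, hc⟩ := hN x y hxy
  have hc_pos : 0 < d c x y := by
    rw [hd.symm₁, hd.symm₂]
    exact (hd.nonneg x y c).lt_of_ne' hc
  have h := hTrans a b c x y
  rw [show d a x y = 0 from ha, show d b x y = 0 from hb, add_zero] at h
  exact le_antisymm (nonpos_of_mul_nonpos_left h hc_pos) (hd.nonneg a b x)

theorem isColinearSet_lineThrough (hd : IsTwoMetric d)
    (hN : ∀ a b : X, a ≠ b → ∃ c : X, d a b c ≠ 0)
    (hTrans : ∀ a b c x y : X, d a b x * d c x y ≤ d a x y + d b x y)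
    {x y : X} (hxy : x ≠ y) : IsColinearSet d (lineThrough d x y) := by
  have hy : ∀ a ∈ lineThrough d x y, ∀ b ∈ lineThrough d x y, d a b y = 0 := by
    rw [hd.lineThrough_comm]
    exact fun a ha b hb => hd.eq_zero_of_mem_lineThrough hN hTrans hxy.symm ha hb
  intro p hp q hq r hr
  rcases eq_or_ne r y with rfl | hry
  · exact hy p hp q hq
  · exact hd.eq_zero_of_mem_lineThrough hN hTrans hry (hy p hp r hr) (hy q hq r hr)

theorem subset_lineThrough {Y : Set X} (hY : IsColinearSet d Y) {x y : X} (hx : x ∈ Y)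
    (hy : y ∈ Y) : Y ⊆ lineThrough d x y :=
  fun a ha => hY a ha x hx y hy

theorem isLine_lineThrough (hd : IsTwoMetric d)
    (hN : ∀ a b : X, a ≠ b → ∃ c : X, d a b c ≠ 0)
    (hTrans : ∀ a b c x y : X, d a b x * d c x y ≤ d a x y + d b x y)
    {x y : X} (hxy : x ≠ y) : IsLine d (lineThrough d x y) :=
  ⟨hd.isColinearSet_lineThrough hN hTrans hxy, fun _ hLZ hZ =>
    (subset_lineThrough hZ (hLZ (hd.mem_lineThrough_left x y))
      (hLZ (hd.mem_lineThrough_right x y))).antisymm hLZ⟩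

theorem eq_lineThrough_of_isLine (hd : IsTwoMetric d)
    (hN : ∀ a b : X, a ≠ b → ∃ c : X, d a b c ≠ 0)
    (hTrans : ∀ a b c x y : X, d a b x * d c x y ≤ d a x y + d b x y)
    {x y : X} (hxy : x ≠ y) {Y : Set X} (hY : IsLine d Y) (hx : x ∈ Y) (hy : y ∈ Y) :
    Y = lineThrough d x y :=
  (hY.2 _ (subset_lineThrough hY.1 hx hy) (hd.isColinearSet_lineThrough hN hTrans hxy)).symm

end IsTwoMetric

end

theorem stmt_8_general {X : Type*} (d : X → X → X → ℝ)
    (hSym₁ : ∀ x y z : X, d x y z = d y x z)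
    (hSym₂ : ∀ x y z : X, d x y z = d x z y)
    (hTetr : ∀ a b c x : X, d a b c ≤ d a b x + d b c x + d a c x)
    (hZ : ∀ a b : X, d a b b = 0)
    (hN : ∀ a b : X, a ≠ b → ∃ c : X, d a b c ≠ 0)
    (hTrans : ∀ a b c x y : X, d a b x * d c x y ≤ d a x y + d b x y)
    (x y : X) (hxy : x ≠ y) :
    (∃! Y : Set X,
      ((∀ p ∈ Y, ∀ q ∈ Y, ∀ r ∈ Y, d p q r = 0) ∧
        ∀ Z : Set X, Y ⊆ Z → (∀ p ∈ Z, ∀ q ∈ Z, ∀ r ∈ Z, d p q r = 0) → Z = Y) ∧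
      x ∈ Y ∧ y ∈ Y) ∧
    (∀ Y : Set X,
      (((∀ p ∈ Y, ∀ q ∈ Y, ∀ r ∈ Y, d p q r = 0) ∧
        ∀ Z : Set X, Y ⊆ Z → (∀ p ∈ Z, ∀ q ∈ Z, ∀ r ∈ Z, d p q r = 0) → Z = Y) ∧
      x ∈ Y ∧ y ∈ Y) → Y = {a : X | d a x y = 0}) := by
  have hd : IsTwoMetric d := ⟨hSym₁, hSym₂, hTetr, hZ⟩
  have huniq : ∀ Y : Set X, (IsLine d Y ∧ x ∈ Y ∧ y ∈ Y) → Y = lineThrough d x y :=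
    fun Y ⟨hY, hx, hy⟩ => hd.eq_lineThrough_of_isLine hN hTrans hxy hY hx hy
  exact ⟨⟨lineThrough d x y, ⟨hd.isLine_lineThrough hN hTrans hxy,
    hd.mem_lineThrough_left x y, hd.mem_lineThrough_right x y⟩, huniq⟩, huniq⟩

theorem stmt_8 {X : Type*} (d : X → X → X → ℝ)
    (hSym₁ : ∀ x y z : X, d x y z = d y x z)
    (hSym₂ : ∀ x y z : X, d x y z = d x z y)
    (hTetr : ∀ a b c x : X, d a b c ≤ d a b x + d b c x + d a c x)
    (hZ : ∀ a b : X, d a b b = 0)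
    (hN : ∀ a b : X, a ≠ b → ∃ c : X, d a b c ≠ 0)
    (hB : ∀ x y z : X, d x y z ≤ 1)
    (hTrans : ∀ a b c x y : X, d a b x * d c x y ≤ d a x y + d b x y)
    (x y : X) (hxy : x ≠ y) :
    (∃! Y : Set X,
      ((∀ p ∈ Y, ∀ q ∈ Y, ∀ r ∈ Y, d p q r = 0) ∧
        ∀ Z : Set X, Y ⊆ Z → (∀ p ∈ Z, ∀ q ∈ Z, ∀ r ∈ Z, d p q r = 0) → Z = Y) ∧
      x ∈ Y ∧ y ∈ Y) ∧
    (∀ Y : Set X,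
      (((∀ p ∈ Y, ∀ q ∈ Y, ∀ r ∈ Y, d p q r = 0) ∧
        ∀ Z : Set X, Y ⊆ Z → (∀ p ∈ Z, ∀ q ∈ Z, ∀ r ∈ Z, d p q r = 0) → Z = Y) ∧
      x ∈ Y ∧ y ∈ Y) → Y = {a : X | d a x y = 0}) :=
  stmt_8_general d hSym₁ hSym₂ hTetr hZ hN hTrans x y hxy
end

section
/- Let X be a set with d : X × X × X → ℝ satisfying (Sym), (Tetr), (Z), (N), (B) and (Trans), and let (x_i) be a sequence in X which is not Cauchy with respect to φ. If LIM(y,(x_i)) and LIM(y′,(x_i)) both hold, then d(y,y′,x_i) → 0 as i → ∞. -/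
/-!
Take `ε₀ > 0` witnessing that `(x i)` is not Cauchy. Far out in the sequence there are `n, m`
and a point `z` with `d (x n) (x m) z > ε₀ / 2`. By (Tetr) at `x i` one of the three faces
`d c (x i) w`, with `w ∈ {x n, x m}`, is at least `ε₀ / 6`, and (Trans) bounds
`d y y' (x i) · d c (x i) w` by `d y (x i) w + d y' (x i) w`, which the two `LIM` hypotheses make
arbitrarily small.
-/

open Filter Topology

section TwoMetric

variable {X : Type*} {d : X → X → X → ℝ}

theorem twoMetric_nonneg (hSym₁ : ∀ x y z : X, d x y z = d y x z)
    (hSym₂ : ∀ x y z : X, d x y z = d x z y)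
    (hTetr : ∀ a b c x : X, d a b c ≤ d a b x + d b c x + d a c x)
    (hZ : ∀ a b : X, d a b b = 0) (a b c : X) : 0 ≤ d a b c := by
  have hbbc : d b b c = 0 := by rw [hSym₂, hSym₁, hZ]
  linarith [hTetr a b b c, hZ a b]

theorem twoMetric_mul_le_three_mul_max (hSym₁ : ∀ x y z : X, d x y z = d y x z)
    (hSym₂ : ∀ x y z : X, d x y z = d x z y)
    (hTetr : ∀ a b c x : X, d a b c ≤ d a b x + d b c x + d a c x)
    (hZ : ∀ a b : X, d a b b = 0)
    (hTrans : ∀ a b c x y : X, d a b x * d c x y ≤ d a x y + d b x y) (y y' a b z p : X) :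
    d y y' p * d a b z ≤ 3 * max (d y p a + d y' p a) (d y p b + d y' p b) := by
  set M := max (d y p a + d y' p a) (d y p b + d y' p b)
  have hface : ∀ c, d y y' p * d c p a ≤ M ∧ d y y' p * d c p b ≤ M := fun c =>
    ⟨(hTrans y y' c p a).trans (le_max_left _ _), (hTrans y y' c p b).trans (le_max_right _ _)⟩
  have htetr : d a b z ≤ d a p b + d z p b + d z p a := by
    have := hTetr a b z p
    rwa [hSym₂ a b p, hSym₁ b z p, hSym₂ z b p, hSym₁ a z p, hSym₂ z a p] at this
  calc d y y' p * d a b z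
      ≤ d y y' p * (d a p b + d z p b + d z p a) :=
        mul_le_mul_of_nonneg_left htetr (twoMetric_nonneg hSym₁ hSym₂ hTetr hZ _ _ _)
    _ ≤ 3 * M := by linarith [(hface a).2, (hface z).2, (hface z).1]

end TwoMetric

theorem stmt_9_general {X : Type*} (d : X → X → X → ℝ) (φ : X → X → ℝ)
    (hSym₁ : ∀ x y z : X, d x y z = d y x z)
    (hSym₂ : ∀ x y z : X, d x y z = d x z y)
    (hTetr : ∀ a b c x : X, d a b c ≤ d a b x + d b c x + d a c x)
    (hZ : ∀ a b : X, d a b b = 0)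
    (hTrans : ∀ a b c x y : X, d a b x * d c x y ≤ d a x y + d b x y)
    (hφ : ∀ x y : X, IsLUB (Set.range fun z => d x y z) (φ x y))
    (x : ℕ → X)
    (hnotCauchy : ¬ (∀ ε > (0 : ℝ), ∃ N : ℕ, ∀ n ≥ N, ∀ m ≥ N, φ (x n) (x m) < ε))
    (y y' : X)
    (hy : ∀ ε > (0 : ℝ), ∃ N : ℕ, ∀ i ≥ N, ∀ j ≥ N, d y (x i) (x j) < ε)
    (hy' : ∀ ε > (0 : ℝ), ∃ N : ℕ, ∀ i ≥ N, ∀ j ≥ N, d y' (x i) (x j) < ε) :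
    Tendsto (fun i => d y y' (x i)) atTop (𝓝 0) := by
  push Not at hnotCauchy
  obtain ⟨ε₀, hε₀, hfar⟩ := hnotCauchy
  rw [Metric.tendsto_atTop]
  intro ε hε
  have hδ : 0 < ε * ε₀ / 12 := by positivity
  obtain ⟨N₁, hN₁⟩ := hy _ hδ
  obtain ⟨N₂, hN₂⟩ := hy' _ hδ
  obtain ⟨n, hn, m, hm, hnm⟩ := hfar (max N₁ N₂)
  obtain ⟨_, ⟨z, rfl⟩, hz, -⟩ :=
    (hφ (x n) (x m)).exists_between (by linarith : ε₀ / 2 < φ (x n) (x m))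
  refine ⟨max N₁ N₂, fun i hi => ?_⟩
  simp only [max_le_iff, ge_iff_le] at hn hm hi
  have hsmall : max (d y (x i) (x n) + d y' (x i) (x n)) (d y (x i) (x m) + d y' (x i) (x m))
      < 2 * (ε * ε₀ / 12) :=
    max_lt (by linarith [hN₁ i hi.1 n hn.1, hN₂ i hi.2 n hn.2])
      (by linarith [hN₁ i hi.1 m hm.1, hN₂ i hi.2 m hm.2])
  have hkey :=
    twoMetric_mul_le_three_mul_max hSym₁ hSym₂ hTetr hZ hTrans y y' (x n) (x m) z (x i)
  have hnonneg := twoMetric_nonneg hSym₁ hSym₂ hTetr hZ y y' (x i)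
  rw [Real.dist_0_eq_abs, abs_of_nonneg hnonneg]
  nlinarith

theorem stmt_9 {X : Type*} (d : X → X → X → ℝ) (φ : X → X → ℝ)
    (hSym₁ : ∀ x y z : X, d x y z = d y x z)
    (hSym₂ : ∀ x y z : X, d x y z = d x z y)
    (hTetr : ∀ a b c x : X, d a b c ≤ d a b x + d b c x + d a c x)
    (hZ : ∀ a b : X, d a b b = 0)
    (hN : ∀ a b : X, a ≠ b → ∃ c : X, d a b c ≠ 0)
    (hB : ∀ x y z : X, d x y z ≤ 1)
    (hTrans : ∀ a b c x y : X, d a b x * d c x y ≤ d a x y + d b x y)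
    (hφ : ∀ x y : X, IsLUB (Set.range fun z => d x y z) (φ x y))
    (x : ℕ → X)
    (hnotCauchy : ¬ (∀ ε > (0 : ℝ), ∃ N : ℕ, ∀ n ≥ N, ∀ m ≥ N, φ (x n) (x m) < ε))
    (y y' : X)
    (hy : ∀ ε > (0 : ℝ), ∃ N : ℕ, ∀ i ≥ N, ∀ j ≥ N, d y (x i) (x j) < ε)
    (hy' : ∀ ε > (0 : ℝ), ∃ N : ℕ, ∀ i ≥ N, ∀ j ≥ N, d y' (x i) (x j) < ε) :
    Tendsto (fun i => d y y' (x i)) atTop (𝓝 0) :=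
  stmt_9_general d φ hSym₁ hSym₂ hTetr hZ hTrans hφ x hnotCauchy y y' hy hy'
end

section
/- Let X be a set with d : X × X × X → ℝ satisfying (Sym), (Tetr), (Z), (N), (B) and (Trans), and let (x_i) be any sequence in X. Then at least one of the following holds: (1) there is no point y with LIM(y,(x_i)); (2) there is exactly one point y with LIM(y,(x_i)); (3) the sequence (x_i) is Cauchy with respect to φ; (4) the set Y ⊆ X of all points y with LIM(y,(x_i)) is a line. -/
/-!
If two distinct points `p, q` are 2-limits of a sequence that is not Cauchy, the axiom (Trans),
applied along pairs `x n, x m` spread apart by a third point, forces `d p q (x n)` to be small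
for infinitely many `n`; the tetrahedral inequality makes `n ↦ d p q (x n)` Cauchy in `ℝ`,
so `d p q (x n) → 0`. The tetrahedral inequality through `x n` then makes any three limits
colinear. Conversely, a point `z` colinear with `p` and `q` satisfies `d z (x n) q → 0` by (Trans)
applied with a point `c` such that `d c q p ≠ 0`, and hence is itself a limit.
-/

open Filter Topology

namespace TwoMetric

variable {X : Type*}

/-- The axioms (Sym), (Tetr) and (Z) of a 2-metric. -/
structure IsTwoMetric (d : X → X → X → ℝ) : Prop where
  swap₁₂ : ∀ x y z : X, d x y z = d y x z
  swap₂₃ : ∀ x y z : X, d x y z = d x z y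
  tetr : ∀ a b c x : X, d a b c ≤ d a b x + d b c x + d a c x
  self_right : ∀ a b : X, d a b b = 0

/-- The relation `LIM(y, (x i))`. -/
def IsLIM (d : X → X → X → ℝ) (x : ℕ → X) (y : X) : Prop :=
  ∀ ε > (0 : ℝ), ∃ N : ℕ, ∀ i ≥ N, ∀ j ≥ N, d y (x i) (x j) < ε

/-- Non-Cauchyness with respect to `φ`, witnessed by third points. -/
def IsSpread (d : X → X → X → ℝ) (x : ℕ → X) : Prop :=
  ∃ ε₀ > (0 : ℝ), ∀ N : ℕ, ∃ n ≥ N, ∃ m ≥ N, ∃ c, ε₀ < d c (x n) (x m)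

variable {d : X → X → X → ℝ} {x : ℕ → X}

namespace IsTwoMetric

theorem rotate (hd : IsTwoMetric d) (a b c : X) : d a b c = d b c a := by
  rw [hd.swap₁₂, hd.swap₂₃]

theorem nonneg (hd : IsTwoMetric d) (a b c : X) : 0 ≤ d a b c := by
  have h := hd.tetr a b b c
  rw [hd.self_right, ← hd.rotate c b b, hd.self_right] at h
  linarith

end IsTwoMetric

theorem IsLIM.eventually {y : X} (hy : IsLIM d x y) {ε : ℝ} (hε : 0 < ε) :
    ∀ᶠ N in atTop, ∀ i ≥ N, ∀ j ≥ N, d y (x i) (x j) < ε := by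
  obtain ⟨N₀, hN₀⟩ := hy ε hε
  filter_upwards [eventually_ge_atTop N₀] with N hN i hi j hj
  exact hN₀ i (hN.trans hi) j (hN.trans hj)

theorem isSpread_of_not_cauchy {φ : X → X → ℝ} (hd : IsTwoMetric d)
    (hφ : ∀ x y : X, IsLUB (Set.range fun z => d x y z) (φ x y))
    (h : ¬ ∀ ε > (0 : ℝ), ∃ N : ℕ, ∀ n ≥ N, ∀ m ≥ N, φ (x n) (x m) < ε) :
    IsSpread d x := by
  push Not at h
  obtain ⟨ε, hε, hφε⟩ := h
  refine ⟨ε / 2, half_pos hε, fun N => ?_⟩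
  obtain ⟨n, hn, m, hm, hφnm⟩ := hφε N
  have hlt : ε / 2 < φ (x n) (x m) := by linarith
  obtain ⟨_, ⟨c, rfl⟩, hc, -⟩ := (hφ (x n) (x m)).exists_between hlt
  exact ⟨n, hn, m, hm, c, by rwa [hd.rotate]⟩

theorem frequently_lt_of_isLIM (hd : IsTwoMetric d)
    (hTrans : ∀ a b c x y : X, d a b x * d c x y ≤ d a x y + d b x y)
    (hspread : IsSpread d x)
    {y z : X} (hy : IsLIM d x y) (hz : IsLIM d x z) {η : ℝ} (hη : 0 < η) :
    ∃ᶠ n in atTop, d y z (x n) < η := by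
  obtain ⟨ε₀, hε₀, hfar⟩ := hspread
  have hδ : 0 < η * ε₀ / 2 := by positivity
  refine frequently_atTop.2 fun N => ?_
  obtain ⟨N', hyN', hzN', hN'⟩ :=
    ((hy.eventually hδ).and ((hz.eventually hδ).and (eventually_ge_atTop N))).exists
  obtain ⟨n, hn, m, hm, c, hc⟩ := hfar N'
  refine ⟨n, hN'.trans hn, ?_⟩
  have hmul : d y z (x n) * ε₀ < η * ε₀ :=
    calc d y z (x n) * ε₀ ≤ d y z (x n) * d c (x n) (x m) :=
          mul_le_mul_of_nonneg_left hc.le (hd.nonneg _ _ _)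
      _ ≤ d y (x n) (x m) + d z (x n) (x m) := hTrans y z c (x n) (x m)
      _ < η * ε₀ := by linarith [hyN' n hn m hm, hzN' n hn m hm]
  exact lt_of_mul_lt_mul_right hmul hε₀.le

/-- By (Tetr), `|d y z (x i) - d y z (x n)| ≤ d y (x i) (x n) + d z (x i) (x n)`, so it suffices
that `d y z (x n)` be small for some large `n`. -/
theorem tendsto_of_isLIM (hd : IsTwoMetric d)
    (hTrans : ∀ a b c x y : X, d a b x * d c x y ≤ d a x y + d b x y)
    (hspread : IsSpread d x)
    {y z : X} (hy : IsLIM d x y) (hz : IsLIM d x z) :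
    Tendsto (fun i => d y z (x i)) atTop (𝓝 0) := by
  refine tendsto_order.2 ⟨fun a ha => .of_forall fun i => ha.trans_le (hd.nonneg _ _ _),
    fun ε hε => ?_⟩
  have hε3 : 0 < ε / 3 := by positivity
  obtain ⟨N, hyN, hzN⟩ := ((hy.eventually hε3).and (hz.eventually hε3)).exists
  obtain ⟨n, hn, hsmall⟩ :=
    frequently_atTop.1 (frequently_lt_of_isLIM hd hTrans hspread hy hz hε3) N
  filter_upwards [eventually_ge_atTop N] with i hi
  linarith [hd.tetr y z (x i) (x n), hyN i hi n hn, hzN i hi n hn]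

theorem colinear_of_isLIM (hd : IsTwoMetric d)
    (hTrans : ∀ a b c x y : X, d a b x * d c x y ≤ d a x y + d b x y)
    (hspread : IsSpread d x)
    {y z w : X} (hy : IsLIM d x y) (hz : IsLIM d x z) (hw : IsLIM d x w) : d y z w = 0 := by
  have hsum : Tendsto (fun i => d y z (x i) + d z w (x i) + d y w (x i)) atTop (𝓝 0) := by
    simpa using ((tendsto_of_isLIM hd hTrans hspread hy hz).add
      (tendsto_of_isLIM hd hTrans hspread hz hw)).add (tendsto_of_isLIM hd hTrans hspread hy hw)
  exact le_antisymm (ge_of_tendsto' hsum fun i => hd.tetr y z w (x i)) (hd.nonneg _ _ _)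

theorem isLIM_of_colinear (hd : IsTwoMetric d)
    (hTrans : ∀ a b c x y : X, d a b x * d c x y ≤ d a x y + d b x y)
    (hspread : IsSpread d x)
    {p q c z : X} (hp : IsLIM d x p) (hq : IsLIM d x q) (hc : d c q p ≠ 0) (hz : d z q p = 0) :
    IsLIM d x z := by
  have hc' : 0 < d c q p := (hd.nonneg _ _ _).lt_of_ne' hc
  -- (Trans) at `z, x k, c, q, p` gives `d z (x k) q * d c q p ≤ d (x k) q p`
  have hzq : Tendsto (fun k => d z (x k) q) atTop (𝓝 0) := by
    have hpq : Tendsto (fun k => d (x k) q p / d c q p) atTop (𝓝 0) := by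
      simpa [hd.rotate _ q p] using (tendsto_of_isLIM hd hTrans hspread hq hp).div_const (d c q p)
    refine squeeze_zero (fun k => hd.nonneg _ _ _) (fun k => ?_) hpq
    rw [le_div_iff₀ hc']
    simpa [hz] using hTrans z (x k) c q p
  intro ε hε
  have hε3 : 0 < ε / 3 := by positivity
  obtain ⟨N₀, hzN₀⟩ := (hzq.eventually (gt_mem_nhds hε3)).exists_forall_of_atTop
  obtain ⟨N, hqN, hN⟩ := ((hq.eventually hε3).and (eventually_ge_atTop N₀)).exists
  refine ⟨N, fun i hi j hj => ?_⟩
  have hij : d (x i) (x j) q < ε / 3 := hd.rotate q (x i) (x j) ▸ hqN i hi j hj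
  linarith [hd.tetr z (x i) (x j) q, hzN₀ i (hN.trans hi), hzN₀ j (hN.trans hj)]

end TwoMetric

theorem stmt_12_general {X : Type*} (d : X → X → X → ℝ) (φ : X → X → ℝ)
    (hSym₁ : ∀ x y z : X, d x y z = d y x z)
    (hSym₂ : ∀ x y z : X, d x y z = d x z y)
    (hTetr : ∀ a b c x : X, d a b c ≤ d a b x + d b c x + d a c x)
    (hZ : ∀ a b : X, d a b b = 0)
    (hN : ∀ a b : X, a ≠ b → ∃ c : X, d a b c ≠ 0)
    (hTrans : ∀ a b c x y : X, d a b x * d c x y ≤ d a x y + d b x y)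
    (hφ : ∀ x y : X, IsLUB (Set.range fun z => d x y z) (φ x y))
    (x : ℕ → X) :
    (¬ ∃ y : X, ∀ ε > (0 : ℝ), ∃ N : ℕ, ∀ i ≥ N, ∀ j ≥ N, d y (x i) (x j) < ε) ∨
    (∃! y : X, ∀ ε > (0 : ℝ), ∃ N : ℕ, ∀ i ≥ N, ∀ j ≥ N, d y (x i) (x j) < ε) ∨
    (∀ ε > (0 : ℝ), ∃ N : ℕ, ∀ n ≥ N, ∀ m ≥ N, φ (x n) (x m) < ε) ∨
    ((∀ p ∈ {y : X | ∀ ε > (0 : ℝ), ∃ N : ℕ, ∀ i ≥ N, ∀ j ≥ N, d y (x i) (x j) < ε},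
        ∀ q ∈ {y : X | ∀ ε > (0 : ℝ), ∃ N : ℕ, ∀ i ≥ N, ∀ j ≥ N, d y (x i) (x j) < ε},
        ∀ r ∈ {y : X | ∀ ε > (0 : ℝ), ∃ N : ℕ, ∀ i ≥ N, ∀ j ≥ N, d y (x i) (x j) < ε},
        d p q r = 0) ∧
      ∀ Z : Set X,
        {y : X | ∀ ε > (0 : ℝ), ∃ N : ℕ, ∀ i ≥ N, ∀ j ≥ N, d y (x i) (x j) < ε} ⊆ Z →
        (∀ p ∈ Z, ∀ q ∈ Z, ∀ r ∈ Z, d p q r = 0) →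
        Z = {y : X | ∀ ε > (0 : ℝ), ∃ N : ℕ, ∀ i ≥ N, ∀ j ≥ N, d y (x i) (x j) < ε}) := by
  have hd : TwoMetric.IsTwoMetric d := ⟨hSym₁, hSym₂, hTetr, hZ⟩
  by_cases hex : ∃ y, TwoMetric.IsLIM d x y
  swap
  · exact Or.inl hex
  by_cases huniq : ∃! y, TwoMetric.IsLIM d x y
  · exact Or.inr (Or.inl huniq)
  by_cases hcauchy : ∀ ε > (0 : ℝ), ∃ N : ℕ, ∀ n ≥ N, ∀ m ≥ N, φ (x n) (x m) < ε
  · exact Or.inr (Or.inr (Or.inl hcauchy))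
  have hspread := TwoMetric.isSpread_of_not_cauchy hd hφ hcauchy
  obtain ⟨p, hp⟩ := hex
  obtain ⟨q, hq, hqp⟩ : ∃ q, TwoMetric.IsLIM d x q ∧ q ≠ p := by
    by_contra! h
    exact huniq ⟨p, hp, h⟩
  refine Or.inr (Or.inr (Or.inr ⟨fun a ha b hb c hc =>
    TwoMetric.colinear_of_isLIM hd hTrans hspread ha hb hc, fun Z hsub hZ => ?_⟩))
  refine Set.Subset.antisymm (fun z hz => ?_) hsub
  obtain ⟨c, hc⟩ := hN q p hqp
  exact TwoMetric.isLIM_of_colinear hd hTrans hspread hp hq ((hd.rotate c q p).trans_ne hc)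
    (hZ z hz q (hsub hq) p (hsub hp))

theorem stmt_12 {X : Type*} (d : X → X → X → ℝ) (φ : X → X → ℝ)
    (hSym₁ : ∀ x y z : X, d x y z = d y x z)
    (hSym₂ : ∀ x y z : X, d x y z = d x z y)
    (hTetr : ∀ a b c x : X, d a b c ≤ d a b x + d b c x + d a c x)
    (hZ : ∀ a b : X, d a b b = 0)
    (hN : ∀ a b : X, a ≠ b → ∃ c : X, d a b c ≠ 0)
    (hB : ∀ x y z : X, d x y z ≤ 1)
    (hTrans : ∀ a b c x y : X, d a b x * d c x y ≤ d a x y + d b x y)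
    (hφ : ∀ x y : X, IsLUB (Set.range fun z => d x y z) (φ x y))
    (x : ℕ → X) :
    (¬ ∃ y : X, ∀ ε > (0 : ℝ), ∃ N : ℕ, ∀ i ≥ N, ∀ j ≥ N, d y (x i) (x j) < ε) ∨
    (∃! y : X, ∀ ε > (0 : ℝ), ∃ N : ℕ, ∀ i ≥ N, ∀ j ≥ N, d y (x i) (x j) < ε) ∨
    (∀ ε > (0 : ℝ), ∃ N : ℕ, ∀ n ≥ N, ∀ m ≥ N, φ (x n) (x m) < ε) ∨
    ((∀ p ∈ {y : X | ∀ ε > (0 : ℝ), ∃ N : ℕ, ∀ i ≥ N, ∀ j ≥ N, d y (x i) (x j) < ε},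
        ∀ q ∈ {y : X | ∀ ε > (0 : ℝ), ∃ N : ℕ, ∀ i ≥ N, ∀ j ≥ N, d y (x i) (x j) < ε},
        ∀ r ∈ {y : X | ∀ ε > (0 : ℝ), ∃ N : ℕ, ∀ i ≥ N, ∀ j ≥ N, d y (x i) (x j) < ε},
        d p q r = 0) ∧
      ∀ Z : Set X,
        {y : X | ∀ ε > (0 : ℝ), ∃ N : ℕ, ∀ i ≥ N, ∀ j ≥ N, d y (x i) (x j) < ε} ⊆ Z →
        (∀ p ∈ Z, ∀ q ∈ Z, ∀ r ∈ Z, d p q r = 0) →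
        Z = {y : X | ∀ ε > (0 : ℝ), ∃ N : ℕ, ∀ i ≥ N, ∀ j ≥ N, d y (x i) (x j) < ε}) :=
  stmt_12_general d φ hSym₁ hSym₂ hTetr hZ hN hTrans hφ x
end

section
/- Let X be a set with d : X × X × X → ℝ satisfying (Sym), (Tetr), (Z), (N) and (B), with associated distance φ. If (x_i), (y_j), (z_k) are Cauchy sequences with respect to φ, then the triple sequence d(x_i,y_j,z_k) is Cauchy in the sense that for every ε > 0 there exists M such that |d(x_i,y_j,z_k) − d(x_p,y_q,z_r)| < ε whenever i,j,k,p,q,r ≥ M. In particular, if (x_i) is Cauchy with respect to φ, then LIM(y,(x_i)) holds for every point y ∈ X. -/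
/-!
Taking the fourth point of the tetrahedral inequality to be a' gives
d(a,b,c) ≤ d(a',b,c) + d(a,a',b) + d(a,a',c) ≤ d(a',b,c) + 2φ(a,a'),
so by symmetry d is 2-Lipschitz in each argument with respect to φ. Changing the three arguments
one at a time bounds |d(x_i,y_j,z_k) - d(x_p,y_q,z_r)| by 2(φ(x_i,x_p) + φ(y_j,y_q) + φ(z_k,z_r)).
The second claim is just d(y,x_i,x_j) ≤ φ(x_i,x_j).
-/

namespace TwoMetric

variable {X : Type*} {d : X → X → X → ℝ} {φ : X → X → ℝ}

theorem le_sup (hφ : ∀ x y : X, IsLUB (Set.range fun z => d x y z) (φ x y)) (a b c : X) :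
    d a b c ≤ φ a b :=
  (hφ a b).1 ⟨c, rfl⟩

theorem sup_comm (hSym₁ : ∀ x y z : X, d x y z = d y x z)
    (hφ : ∀ x y : X, IsLUB (Set.range fun z => d x y z) (φ x y)) (a b : X) :
    φ a b = φ b a := by
  have hrange : (Set.range fun z => d b a z) = Set.range fun z => d a b z := by
    simp only [hSym₁ b a]
  exact (hφ a b).unique (hrange ▸ hφ b a)

theorem le_add_sup_left (hSym₁ : ∀ x y z : X, d x y z = d y x z)
    (hSym₂ : ∀ x y z : X, d x y z = d x z y)
    (hTetr : ∀ a b c x : X, d a b c ≤ d a b x + d b c x + d a c x)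
    (hφ : ∀ x y : X, IsLUB (Set.range fun z => d x y z) (φ x y)) (a a' b c : X) :
    d a b c ≤ d a' b c + 2 * φ a a' := by
  have hb : d a b a' ≤ φ a a' := hSym₂ a b a' ▸ le_sup hφ a a' b
  have hc : d a c a' ≤ φ a a' := hSym₂ a c a' ▸ le_sup hφ a a' c
  have hbc : d b c a' = d a' b c := by rw [hSym₂, hSym₁]
  linarith [hTetr a b c a']

theorem abs_sub_le_sup_left (hSym₁ : ∀ x y z : X, d x y z = d y x z)
    (hSym₂ : ∀ x y z : X, d x y z = d x z y)
    (hTetr : ∀ a b c x : X, d a b c ≤ d a b x + d b c x + d a c x)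
    (hφ : ∀ x y : X, IsLUB (Set.range fun z => d x y z) (φ x y)) (a a' b c : X) :
    |d a b c - d a' b c| ≤ 2 * φ a a' := by
  have h₁ := le_add_sup_left hSym₁ hSym₂ hTetr hφ a a' b c
  have h₂ := le_add_sup_left hSym₁ hSym₂ hTetr hφ a' a b c
  rw [sup_comm hSym₁ hφ a' a] at h₂
  exact abs_sub_le_iff.2 ⟨by linarith, by linarith⟩

theorem abs_sub_le_sup (hSym₁ : ∀ x y z : X, d x y z = d y x z)
    (hSym₂ : ∀ x y z : X, d x y z = d x z y)
    (hTetr : ∀ a b c x : X, d a b c ≤ d a b x + d b c x + d a c x)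
    (hφ : ∀ x y : X, IsLUB (Set.range fun z => d x y z) (φ x y)) (a a' b b' c c' : X) :
    |d a b c - d a' b' c'| ≤ 2 * (φ a a' + φ b b' + φ c c') := by
  have hperm : ∀ x y z : X, d x y z = d z x y := fun x y z => by rw [hSym₂, hSym₁]
  have ha := abs_sub_le_sup_left hSym₁ hSym₂ hTetr hφ a a' b c
  have hb := abs_sub_le_sup_left hSym₁ hSym₂ hTetr hφ b b' a' c
  have hc := abs_sub_le_sup_left hSym₁ hSym₂ hTetr hφ c c' a' b'
  rw [hSym₁ b, hSym₁ b'] at hb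
  rw [← hperm a' b' c, ← hperm a' b' c'] at hc
  linarith [abs_sub_le (d a b c) (d a' b c) (d a' b' c'),
    abs_sub_le (d a' b c) (d a' b' c) (d a' b' c')]

end TwoMetric

open TwoMetric in
theorem stmt_13_general {X : Type*} (d : X → X → X → ℝ) (φ : X → X → ℝ)
    (hSym₁ : ∀ x y z : X, d x y z = d y x z)
    (hSym₂ : ∀ x y z : X, d x y z = d x z y)
    (hTetr : ∀ a b c x : X, d a b c ≤ d a b x + d b c x + d a c x)
    (hφ : ∀ x y : X, IsLUB (Set.range fun z => d x y z) (φ x y)) :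
    (∀ x y z : ℕ → X,
      (∀ ε > (0 : ℝ), ∃ N : ℕ, ∀ n ≥ N, ∀ m ≥ N, φ (x n) (x m) < ε) →
      (∀ ε > (0 : ℝ), ∃ N : ℕ, ∀ n ≥ N, ∀ m ≥ N, φ (y n) (y m) < ε) →
      (∀ ε > (0 : ℝ), ∃ N : ℕ, ∀ n ≥ N, ∀ m ≥ N, φ (z n) (z m) < ε) →
      ∀ ε > (0 : ℝ), ∃ M : ℕ, ∀ i ≥ M, ∀ j ≥ M, ∀ k ≥ M, ∀ p ≥ M, ∀ q ≥ M, ∀ r ≥ M,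
        |d (x i) (y j) (z k) - d (x p) (y q) (z r)| < ε) ∧
    (∀ x : ℕ → X,
      (∀ ε > (0 : ℝ), ∃ N : ℕ, ∀ n ≥ N, ∀ m ≥ N, φ (x n) (x m) < ε) →
      ∀ y : X, ∀ ε > (0 : ℝ), ∃ N : ℕ, ∀ i ≥ N, ∀ j ≥ N, d y (x i) (x j) < ε) := by
  refine ⟨fun x y z hx hy hz ε hε => ?_, fun x hx y ε hε => ?_⟩
  · obtain ⟨Nx, hNx⟩ := hx (ε / 6) (by positivity)
    obtain ⟨Ny, hNy⟩ := hy (ε / 6) (by positivity)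
    obtain ⟨Nz, hNz⟩ := hz (ε / 6) (by positivity)
    refine ⟨max Nx (max Ny Nz), fun i hi j hj k hk p hp q hq r hr => ?_⟩
    have := abs_sub_le_sup hSym₁ hSym₂ hTetr hφ (x i) (x p) (y j) (y q) (z k) (z r)
    have := hNx i (by omega) p (by omega)
    have := hNy j (by omega) q (by omega)
    have := hNz k (by omega) r (by omega)
    linarith
  · obtain ⟨N, hN⟩ := hx ε hε
    refine ⟨N, fun i hi j hj => ?_⟩
    calc d y (x i) (x j) = d (x i) (x j) y := by rw [hSym₁, hSym₂]
      _ ≤ φ (x i) (x j) := le_sup hφ _ _ _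
      _ < ε := hN i hi j hj

theorem stmt_13 {X : Type*} (d : X → X → X → ℝ) (φ : X → X → ℝ)
    (hSym₁ : ∀ x y z : X, d x y z = d y x z)
    (hSym₂ : ∀ x y z : X, d x y z = d x z y)
    (hTetr : ∀ a b c x : X, d a b c ≤ d a b x + d b c x + d a c x)
    (hZ : ∀ a b : X, d a b b = 0)
    (hN : ∀ a b : X, a ≠ b → ∃ c : X, d a b c ≠ 0)
    (hB : ∀ x y z : X, d x y z ≤ 1)
    (hφ : ∀ x y : X, IsLUB (Set.range fun z => d x y z) (φ x y)) :
    (∀ x y z : ℕ → X,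
      (∀ ε > (0 : ℝ), ∃ N : ℕ, ∀ n ≥ N, ∀ m ≥ N, φ (x n) (x m) < ε) →
      (∀ ε > (0 : ℝ), ∃ N : ℕ, ∀ n ≥ N, ∀ m ≥ N, φ (y n) (y m) < ε) →
      (∀ ε > (0 : ℝ), ∃ N : ℕ, ∀ n ≥ N, ∀ m ≥ N, φ (z n) (z m) < ε) →
      ∀ ε > (0 : ℝ), ∃ M : ℕ, ∀ i ≥ M, ∀ j ≥ M, ∀ k ≥ M, ∀ p ≥ M, ∀ q ≥ M, ∀ r ≥ M,
        |d (x i) (y j) (z k) - d (x p) (y q) (z r)| < ε) ∧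
    (∀ x : ℕ → X,
      (∀ ε > (0 : ℝ), ∃ N : ℕ, ∀ n ≥ N, ∀ m ≥ N, φ (x n) (x m) < ε) →
      ∀ y : X, ∀ ε > (0 : ℝ), ∃ N : ℕ, ∀ i ≥ N, ∀ j ≥ N, d y (x i) (x j) < ε) :=
  stmt_13_general d φ hSym₁ hSym₂ hTetr hφ
end

section
/- Let X be a set with d : X × X × X → ℝ satisfying (Sym), (Tetr), (Z), (N) and (B), with associated distance φ. Suppose (x_i) is a tri-Cauchy sequence and y ∈ X is an accumulation point of (x_i) with respect to φ (i.e. some subsequence of (x_i) converges to y with respect to φ). Then LIM(y,(x_i)) holds. -/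
/-!
Pick a term `w = x (u n)` of the subsequence far enough along that `φ w y < ε / 3` and the
tri-Cauchy bound `ε / 3` applies at `w`. The tetrahedral inequality with apex `w` gives
`d y (x i) (x j) ≤ d y (x i) w + d y (x j) w + d (x i) (x j) w ≤ 2 φ w y + ε / 3 < ε`.
-/

open Filter Topology

section TwoMetric

variable {X : Type*} {d : X → X → X → ℝ} {φ : X → X → ℝ}

lemma le_of_isLUB_swap (hSym₁ : ∀ x y z : X, d x y z = d y x z)
    (hSym₂ : ∀ x y z : X, d x y z = d x z y)
    (hφ : ∀ x y : X, IsLUB (Set.range fun z => d x y z) (φ x y)) (y a w : X) :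
    d y a w ≤ φ w y := by
  rw [hSym₂, hSym₁]
  exact (hφ w y).1 ⟨a, rfl⟩

lemma le_two_mul_add_of_isLUB (hSym₁ : ∀ x y z : X, d x y z = d y x z)
    (hSym₂ : ∀ x y z : X, d x y z = d x z y)
    (hTetr : ∀ a b c x : X, d a b c ≤ d a b x + d b c x + d a c x)
    (hφ : ∀ x y : X, IsLUB (Set.range fun z => d x y z) (φ x y)) (y a b w : X) :
    d y a b ≤ 2 * φ w y + d a b w := by
  have hya := le_of_isLUB_swap hSym₁ hSym₂ hφ y a w
  have hyb := le_of_isLUB_swap hSym₁ hSym₂ hφ y b w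
  linarith [hTetr y a b w]

end TwoMetric

theorem stmt_14_general {X : Type*} (d : X → X → X → ℝ) (φ : X → X → ℝ)
    (hSym₁ : ∀ x y z : X, d x y z = d y x z)
    (hSym₂ : ∀ x y z : X, d x y z = d x z y)
    (hTetr : ∀ a b c x : X, d a b c ≤ d a b x + d b c x + d a c x)
    (hφ : ∀ x y : X, IsLUB (Set.range fun z => d x y z) (φ x y))
    (x : ℕ → X)
    (htri : ∀ ε > (0 : ℝ), ∃ m : ℕ, ∀ i ≥ m, ∀ j ≥ m, ∀ k ≥ m, d (x i) (x j) (x k) < ε)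
    (y : X) (u : ℕ → ℕ) (hu : StrictMono u)
    (hconv : Tendsto (fun n => φ (x (u n)) y) atTop (𝓝 0)) :
    ∀ ε > (0 : ℝ), ∃ N : ℕ, ∀ i ≥ N, ∀ j ≥ N, d y (x i) (x j) < ε := by
  intro ε hε
  obtain ⟨m, hm⟩ := htri (ε / 3) (by positivity)
  obtain ⟨n, hmn, hφn⟩ : ∃ n, m ≤ u n ∧ φ (x (u n)) y < ε / 3 :=
    ((hu.tendsto_atTop.eventually_ge_atTop m).and
      (hconv.eventually_lt_const (by positivity))).exists
  refine ⟨m, fun i hi j hj => ?_⟩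
  have := le_two_mul_add_of_isLUB hSym₁ hSym₂ hTetr hφ y (x i) (x j) (x (u n))
  linarith [hm i hi j hj (u n) hmn]

theorem stmt_14 {X : Type*} (d : X → X → X → ℝ) (φ : X → X → ℝ)
    (hSym₁ : ∀ x y z : X, d x y z = d y x z)
    (hSym₂ : ∀ x y z : X, d x y z = d x z y)
    (hTetr : ∀ a b c x : X, d a b c ≤ d a b x + d b c x + d a c x)
    (hZ : ∀ a b : X, d a b b = 0)
    (hN : ∀ a b : X, a ≠ b → ∃ c : X, d a b c ≠ 0)
    (hB : ∀ x y z : X, d x y z ≤ 1)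
    (hφ : ∀ x y : X, IsLUB (Set.range fun z => d x y z) (φ x y))
    (x : ℕ → X)
    (htri : ∀ ε > (0 : ℝ), ∃ m : ℕ, ∀ i ≥ m, ∀ j ≥ m, ∀ k ≥ m, d (x i) (x j) (x k) < ε)
    (y : X) (u : ℕ → ℕ) (hu : StrictMono u)
    (hconv : Tendsto (fun n => φ (x (u n)) y) atTop (𝓝 0)) :
    ∀ ε > (0 : ℝ), ∃ N : ℕ, ∀ i ≥ N, ∀ j ≥ N, d y (x i) (x j) < ε :=
  stmt_14_general d φ hSym₁ hSym₂ hTetr hφ x htri y u hu hconv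
end

section
/- Let X be a nonempty set with d : X × X × X → ℝ satisfying (Sym), (Tetr), (Z), (N), (B) and (Trans), such that (X,φ) is compact. Let F : X → X satisfy d(F(x),F(y),F(z)) ≤ k·d(x,y,z) for all x,y,z, with 0 < k < 1. Then either F has a fixed point, or there exists a line Y ⊆ X which is fixed in the sense that F(Y) ⊆ Y and Y is the unique line containing F(Y). -/
/-!
Iterating `F` from any point gives an orbit whose cluster points (which exist by compactness) are
colinear, because `d` of three orbit points beyond step `N` is at most `k ^ N`. If for every `s`
some triangle `F p, F q, F s` is nondegenerate, (Trans) makes the cluster set `F`-invariant;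
otherwise some `z` has `d (F p) (F q) (F z) = 0` for all `p, q`, and the image of `F` is colinear.
Either way there is a nonempty colinear `F`-invariant set `S`. Without a fixed point `F ∘ F` is
not constant on `S`, so there are `p, q ∈ S` with `F (F p) ≠ F (F q)`. Then `F` maps the line
through `F p`, `F q` into the line through `F (F p)`, `F (F q)`, and the two coincide as both
contain `S`; any line containing the image contains `F p` and `F q`, hence is this line.
-/

open Filter Topology

namespace TwoMetric

variable {X : Type*}

structure IsTwoPseudometric (d : X → X → X → ℝ) : Prop where
  symm₁ : ∀ x y z, d x y z = d y x z
  symm₂ : ∀ x y z, d x y z = d x z y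
  tetr : ∀ a b c x, d a b c ≤ d a b x + d b c x + d a c x
  eq_zero : ∀ a b, d a b b = 0

def IsColinear (d : X → X → X → ℝ) (S : Set X) : Prop :=
  ∀ p ∈ S, ∀ q ∈ S, ∀ r ∈ S, d p q r = 0

def IsLine (d : X → X → X → ℝ) (Y : Set X) : Prop :=
  IsColinear d Y ∧ ∀ Z, Y ⊆ Z → IsColinear d Z → Z = Y

def lineThrough (d : X → X → X → ℝ) (u w : X) : Set X :=
  {c | d c u w = 0}

/-- The cluster points of `u` for the distance `φ x y = sup_c d x y c`. -/
def clusterSet (d : X → X → X → ℝ) (u : ℕ → X) : Set X :=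
  {z | ∀ ε > 0, ∃ᶠ n in atTop, ∀ c, d (u n) z c ≤ ε}

variable {d : X → X → X → ℝ}

theorem IsColinear.mono {S T : Set X} (hT : IsColinear d T) (hST : S ⊆ T) : IsColinear d S :=
  fun p hp q hq r hr => hT p (hST hp) q (hST hq) r (hST hr)

theorem IsColinear.subset_lineThrough {Z : Set X} (hZ : IsColinear d Z) {u w : X} (hu : u ∈ Z)
    (hw : w ∈ Z) : Z ⊆ lineThrough d u w :=
  fun t ht => hZ t ht u hu w hw

theorem IsLine.eq_lineThrough {Y : Set X} (hY : IsLine d Y) {u w : X}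
    (hL : IsColinear d (lineThrough d u w)) (hu : u ∈ Y) (hw : w ∈ Y) : Y = lineThrough d u w :=
  (hY.2 _ (hY.1.subset_lineThrough hu hw) hL).symm

theorem iterate_le_pow_mul {F : X → X} {k : ℝ} (hF : ∀ x y z, d (F x) (F y) (F z) ≤ k * d x y z)
    (hk : 0 ≤ k) (m : ℕ) (a b c : X) :
    d (F^[m] a) (F^[m] b) (F^[m] c) ≤ k ^ m * d a b c := by
  induction m generalizing a b c with
  | zero => simp
  | succ m ih =>
    simp only [Function.iterate_succ_apply]
    calc d (F^[m] (F a)) (F^[m] (F b)) (F^[m] (F c))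
        ≤ k ^ m * d (F a) (F b) (F c) := ih _ _ _
      _ ≤ k ^ m * (k * d a b c) := mul_le_mul_of_nonneg_left (hF a b c) (by positivity)
      _ = k ^ (m + 1) * d a b c := by ring

theorem iterate_le_pow {F : X → X} {k : ℝ} (hB : ∀ x y z, d x y z ≤ 1)
    (hF : ∀ x y z, d (F x) (F y) (F z) ≤ k * d x y z) (hk : 0 ≤ k) (x : X) {N n₁ n₂ n₃ : ℕ}
    (h₁ : N ≤ n₁) (h₂ : N ≤ n₂) (h₃ : N ≤ n₃) :
    d (F^[n₁] x) (F^[n₂] x) (F^[n₃] x) ≤ k ^ N := by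
  obtain ⟨m₁, rfl⟩ := Nat.exists_eq_add_of_le h₁
  obtain ⟨m₂, rfl⟩ := Nat.exists_eq_add_of_le h₂
  obtain ⟨m₃, rfl⟩ := Nat.exists_eq_add_of_le h₃
  simp only [Function.iterate_add_apply]
  calc _ ≤ k ^ N * d (F^[m₁] x) (F^[m₂] x) (F^[m₃] x) := iterate_le_pow_mul hF hk N _ _ _
    _ ≤ k ^ N * 1 := mul_le_mul_of_nonneg_left (hB _ _ _) (by positivity)
    _ = k ^ N := mul_one _

theorem clusterSet_nonempty {φ : X → X → ℝ} (hφ : ∀ x y c, d x y c ≤ φ x y)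
    (hcompact : ∀ u : ℕ → X, ∃ y : X, ∃ v : ℕ → ℕ, StrictMono v ∧
      Tendsto (fun n => φ (u (v n)) y) atTop (𝓝 0)) (u : ℕ → X) :
    (clusterSet d u).Nonempty := by
  obtain ⟨y, v, hv, hlim⟩ := hcompact u
  refine ⟨y, fun ε hε => hv.tendsto_atTop.frequently ?_⟩
  exact ((hlim.eventually (ge_mem_nhds hε)).frequently).mono fun n hn c => (hφ _ _ c).trans hn

namespace IsTwoPseudometric

theorem cyclic (hd : IsTwoPseudometric d) (a b c : X) : d a b c = d b c a := by
  rw [hd.symm₁, hd.symm₂]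

theorem symm₁₃ (hd : IsTwoPseudometric d) (a b c : X) : d a b c = d c b a :=
  (hd.cyclic a b c).trans (hd.symm₁ b c a)

theorem eq_zero_left (hd : IsTwoPseudometric d) (a b : X) : d a a b = 0 := by
  rw [hd.symm₁₃]
  exact hd.eq_zero b a

theorem nonneg (hd : IsTwoPseudometric d) (a b c : X) : 0 ≤ d a b c := by
  linarith [hd.tetr a b b c, hd.eq_zero a b, hd.eq_zero_left b c]

theorem le_add_of_forall_le (hd : IsTwoPseudometric d) {a a' : X} {ε : ℝ}
    (h : ∀ c, d a' a c ≤ ε) (b c : X) : d a b c ≤ d a' b c + 2 * ε := by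
  linarith [hd.tetr a b c a', h b, h c, hd.cyclic a' a b, hd.cyclic a' a c, hd.cyclic a' b c]

theorem le_add_of_forall_le₃ (hd : IsTwoPseudometric d) {p q r p' q' r' : X} {ε : ℝ}
    (hp : ∀ c, d p' p c ≤ ε) (hq : ∀ c, d q' q c ≤ ε) (hr : ∀ c, d r' r c ≤ ε) :
    d p q r ≤ d p' q' r' + 6 * ε := by
  linarith [hd.le_add_of_forall_le hp q r, hd.le_add_of_forall_le hq r p',
    hd.le_add_of_forall_le hr p' q', hd.cyclic p' q r, hd.cyclic q' r p', hd.cyclic r' p' q']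

theorem left_mem_lineThrough (hd : IsTwoPseudometric d) (u w : X) : u ∈ lineThrough d u w :=
  hd.eq_zero_left u w

theorem right_mem_lineThrough (hd : IsTwoPseudometric d) (u w : X) : w ∈ lineThrough d u w := by
  show d w u w = 0
  rw [hd.symm₁]
  exact hd.eq_zero u w

theorem isColinear_lineThrough (hd : IsTwoPseudometric d)
    (hTrans : ∀ a b c x y : X, d a b x * d c x y ≤ d a x y + d b x y) {u w e : X}
    (he : d u w e ≠ 0) :
    IsColinear d (lineThrough d u w) := by
  have he' : 0 < d e u w := by
    rw [hd.cyclic]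
    exact (hd.nonneg u w e).lt_of_ne' he
  -- (Trans) against the nondegenerate triangle `e u w`
  have hu : ∀ z ∈ lineThrough d u w, ∀ c ∈ lineThrough d u w, d z c u = 0 := by
    intro z hz c hc
    have := hTrans z c e u w
    rw [hz, hc] at this
    exact le_antisymm (nonpos_of_mul_nonpos_left (by linarith) he') (hd.nonneg z c u)
  intro c₁ h₁ c₂ h₂ c₃ h₃
  linarith [hd.tetr c₁ c₂ c₃ u, hd.nonneg c₁ c₂ c₃, hu c₁ h₁ c₂ h₂, hu c₂ h₂ c₃ h₃, hu c₁ h₁ c₃ h₃]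

theorem isLine_lineThrough (hd : IsTwoPseudometric d)
    (hTrans : ∀ a b c x y : X, d a b x * d c x y ≤ d a x y + d b x y) {u w e : X}
    (he : d u w e ≠ 0) : IsLine d (lineThrough d u w) :=
  ⟨hd.isColinear_lineThrough hTrans he, fun _ hLZ hZ =>
    (hZ.subset_lineThrough (hLZ (hd.left_mem_lineThrough u w))
      (hLZ (hd.right_mem_lineThrough u w))).antisymm hLZ⟩

variable {F : X → X} {k : ℝ}

theorem apply_eq_zero_of_eq_zero (hd : IsTwoPseudometric d)
    (hF : ∀ x y z, d (F x) (F y) (F z) ≤ k * d x y z) {a b c : X} (h : d a b c = 0) :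
    d (F a) (F b) (F c) = 0 :=
  le_antisymm (by simpa [h] using hF a b c) (hd.nonneg _ _ _)

theorem mul_apply_le (hd : IsTwoPseudometric d)
    (hTrans : ∀ a b c x y : X, d a b x * d c x y ≤ d a x y + d b x y)
    (hF : ∀ x y z, d (F x) (F y) (F z) ≤ k * d x y z) (hk : 0 ≤ k) {a s : X} {η : ℝ}
    (h : ∀ c, d a s c ≤ η) (p q c : X) :
    d (F p) (F q) (F s) * d (F a) (F s) c ≤ 2 * k * η := by
  have hp : d (F p) (F s) (F a) ≤ k * η :=
    (hF p s a).trans (mul_le_mul_of_nonneg_left (hd.symm₁₃ p s a ▸ h p) hk)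
  have hq : d (F q) (F s) (F a) ≤ k * η :=
    (hF q s a).trans (mul_le_mul_of_nonneg_left (hd.symm₁₃ q s a ▸ h q) hk)
  rw [hd.symm₁₃ (F a)]
  linarith [hTrans (F p) (F q) c (F s) (F a)]

theorem mapsTo_clusterSet_iterate (hd : IsTwoPseudometric d)
    (hTrans : ∀ a b c x y : X, d a b x * d c x y ≤ d a x y + d b x y)
    (hF : ∀ x y z, d (F x) (F y) (F z) ≤ k * d x y z) (hk : 0 < k)
    (hnondeg : ∀ s, ∃ p q, d (F p) (F q) (F s) ≠ 0) (x : X) :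
    Set.MapsTo F (clusterSet d fun n => F^[n] x) (clusterSet d fun n => F^[n] x) := by
  intro s hs ε hε
  obtain ⟨p, q, hpq⟩ := hnondeg s
  have hδ : 0 < d (F p) (F q) (F s) := (hd.nonneg _ _ _).lt_of_ne' hpq
  refine (tendsto_add_atTop_nat 1).frequently
    ((hs (ε * d (F p) (F q) (F s) / (2 * k)) (by positivity)).mono fun n hn c => ?_)
  show d (F^[n + 1] x) (F s) c ≤ ε
  rw [Function.iterate_succ_apply']
  refine le_of_mul_le_mul_left ((hd.mul_apply_le hTrans hF hk.le hn p q c).trans_eq ?_) hδ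
  field_simp

theorem isColinear_clusterSet_iterate (hd : IsTwoPseudometric d) (hB : ∀ x y z, d x y z ≤ 1)
    (hF : ∀ x y z, d (F x) (F y) (F z) ≤ k * d x y z) (hk0 : 0 ≤ k) (hk1 : k < 1) (x : X) :
    IsColinear d (clusterSet d fun n => F^[n] x) := by
  intro p hp q hq r hr
  refine le_antisymm (le_of_forall_pos_le_add fun ε hε => ?_) (hd.nonneg p q r)
  obtain ⟨N, hN⟩ := exists_pow_lt_of_lt_one (by positivity : 0 < ε / 7) hk1
  obtain ⟨n₁, hn₁, h₁⟩ := frequently_atTop.1 (hp (ε / 7) (by positivity)) N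
  obtain ⟨n₂, hn₂, h₂⟩ := frequently_atTop.1 (hq (ε / 7) (by positivity)) N
  obtain ⟨n₃, hn₃, h₃⟩ := frequently_atTop.1 (hr (ε / 7) (by positivity)) N
  linarith [hd.le_add_of_forall_le₃ h₁ h₂ h₃, iterate_le_pow hB hF hk0 x hn₁ hn₂ hn₃]

theorem exists_isColinear_mapsTo (hd : IsTwoPseudometric d)
    (hN : ∀ a b : X, a ≠ b → ∃ c : X, d a b c ≠ 0) (hB : ∀ x y z, d x y z ≤ 1)
    (hTrans : ∀ a b c x y : X, d a b x * d c x y ≤ d a x y + d b x y)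
    (hcluster : ∀ u : ℕ → X, (clusterSet d u).Nonempty)
    (hF : ∀ x y z, d (F x) (F y) (F z) ≤ k * d x y z) (hk0 : 0 < k) (hk1 : k < 1)
    (hfix : ∀ z, F z ≠ z) (x : X) :
    ∃ S : Set X, S.Nonempty ∧ IsColinear d S ∧ Set.MapsTo F S S := by
  by_cases hdeg : ∃ z, ∀ p q, d (F p) (F q) (F z) = 0
  · obtain ⟨z, hz⟩ := hdeg
    obtain ⟨e, he⟩ := hN _ _ (hfix (F z))
    refine ⟨Set.range F, ⟨_, Set.mem_range_self x⟩,
      (hd.isColinear_lineThrough hTrans he).mono ?_, fun _ _ => Set.mem_range_self _⟩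
    rintro _ ⟨p, rfl⟩
    exact hz p (F z)
  · push Not at hdeg
    exact ⟨_, hcluster _, hd.isColinear_clusterSet_iterate hB hF hk0.le hk1 x,
      hd.mapsTo_clusterSet_iterate hTrans hF hk0 hdeg x⟩

theorem exists_isLine_mapsTo (hd : IsTwoPseudometric d)
    (hN : ∀ a b : X, a ≠ b → ∃ c : X, d a b c ≠ 0)
    (hTrans : ∀ a b c x y : X, d a b x * d c x y ≤ d a x y + d b x y)
    (hF : ∀ a b c, d a b c = 0 → d (F a) (F b) (F c) = 0) (hfix : ∀ z, F z ≠ z) {S : Set X}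
    (hS : S.Nonempty) (hSc : IsColinear d S) (hSF : Set.MapsTo F S S) :
    ∃ Y, IsLine d Y ∧ Set.MapsTo F Y Y ∧ ∀ Z, IsLine d Z → F '' Y ⊆ Z → Z = Y := by
  obtain ⟨s, hs⟩ := hS
  obtain ⟨p, hp, q, hq, hpq⟩ : ∃ p ∈ S, ∃ q ∈ S, F (F p) ≠ F (F q) :=
    ⟨F s, hSF hs, s, hs, hfix (F (F s))⟩
  obtain ⟨e, he⟩ := hN _ _ fun h => hpq (congrArg F h)
  obtain ⟨e', he'⟩ := hN _ _ hpq
  have hL := hd.isLine_lineThrough hTrans he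
  have hFp := hSF hp
  have hFq := hSF hq
  refine ⟨lineThrough d (F p) (F q), hL, fun a ha => ?_, fun Z hZ hLZ => ?_⟩
  · exact hd.isColinear_lineThrough hTrans he' _ (hF _ _ _ ha)
      _ (hSc _ hFp _ (hSF hFp) _ (hSF hFq)) _ (hSc _ hFq _ (hSF hFp) _ (hSF hFq))
  · exact hZ.eq_lineThrough hL.1 (hLZ ⟨p, hSc _ hp _ hFp _ hFq, rfl⟩)
      (hLZ ⟨q, hSc _ hq _ hFp _ hFq, rfl⟩)

end IsTwoPseudometric

end TwoMetric

open TwoMetric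

theorem stmt_17 {X : Type*} [Nonempty X] (d : X → X → X → ℝ) (φ : X → X → ℝ)
    (hSym₁ : ∀ x y z : X, d x y z = d y x z)
    (hSym₂ : ∀ x y z : X, d x y z = d x z y)
    (hTetr : ∀ a b c x : X, d a b c ≤ d a b x + d b c x + d a c x)
    (hZ : ∀ a b : X, d a b b = 0)
    (hN : ∀ a b : X, a ≠ b → ∃ c : X, d a b c ≠ 0)
    (hB : ∀ x y z : X, d x y z ≤ 1)
    (hTrans : ∀ a b c x y : X, d a b x * d c x y ≤ d a x y + d b x y)
    (hφ : ∀ x y : X, IsLUB (Set.range fun z => d x y z) (φ x y))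
    (hcompact : ∀ u : ℕ → X, ∃ y : X, ∃ v : ℕ → ℕ, StrictMono v ∧
      Tendsto (fun n => φ (u (v n)) y) atTop (𝓝 0))
    (F : X → X) (k : ℝ) (hk0 : 0 < k) (hk1 : k < 1)
    (hF : ∀ x y z : X, d (F x) (F y) (F z) ≤ k * d x y z) :
    (∃ z : X, F z = z) ∨
    (∃ Y : Set X,
      ((∀ p ∈ Y, ∀ q ∈ Y, ∀ r ∈ Y, d p q r = 0) ∧
        ∀ Z : Set X, Y ⊆ Z → (∀ p ∈ Z, ∀ q ∈ Z, ∀ r ∈ Z, d p q r = 0) → Z = Y) ∧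
      (∀ p ∈ Y, F p ∈ Y) ∧
      (∀ Z : Set X,
        ((∀ p ∈ Z, ∀ q ∈ Z, ∀ r ∈ Z, d p q r = 0) ∧
          ∀ W : Set X, Z ⊆ W → (∀ p ∈ W, ∀ q ∈ W, ∀ r ∈ W, d p q r = 0) → W = Z) →
        F '' Y ⊆ Z → Z = Y)) := by
  have hd : IsTwoPseudometric d := ⟨hSym₁, hSym₂, hTetr, hZ⟩
  refine or_iff_not_imp_left.2 fun hfix => ?_
  push Not at hfix
  have hcluster := clusterSet_nonempty (fun x y c => (hφ x y).1 ⟨c, rfl⟩) hcompact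
  obtain ⟨S, hS, hSc, hSF⟩ := hd.exists_isColinear_mapsTo hN hB hTrans hcluster hF hk0 hk1 hfix
    (Classical.arbitrary X)
  exact hd.exists_isLine_mapsTo hN hTrans (fun _ _ _ => hd.apply_eq_zero_of_eq_zero hF) hfix hS hSc hSF
end

section
/- Let S² = {x ∈ ℝ³ : ‖x‖ = 1} and define d(x,y,z) := |det M| where M is the 3×3 matrix with columns x, y, z. Then d satisfies on S²: (Sym) d is invariant under all permutations of its three arguments; (Tetr) d(a,b,c) ≤ d(a,b,x) + d(b,c,x) + d(a,c,x) for all a,b,c,x ∈ S²; (Z) d(a,b,b) = 0 for all a,b ∈ S²; (B) d(x,y,z) ≤ 1 for all x,y,z ∈ S²; and (Trans) d(a,b,x)·d(c,x,y) ≤ d(a,x,y) + d(b,x,y) for all a,b,c,x,y ∈ S². -/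
open Filter Topology

private def D3 (x0 x1 x2 y0 y1 y2 z0 z1 z2 : ℝ) : ℝ :=
  x0*y1*z2 - x0*y2*z1 - x1*y0*z2 + x1*y2*z0 + x2*y0*z1 - x2*y1*z0

private lemma det_eq (x y z : EuclideanSpace ℝ (Fin 3)) :
    Matrix.det (Matrix.of ![![x 0, y 0, z 0], ![x 1, y 1, z 1], ![x 2, y 2, z 2]]) =
    D3 (x 0) (x 1) (x 2) (y 0) (y 1) (y 2) (z 0) (z 1) (z 2) := by
  simp [Matrix.det_fin_three, D3]; ring

private lemma norm_sq_one (x : EuclideanSpace ℝ (Fin 3)) (hx : ‖x‖ = 1) :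
    (x 0)^2 + (x 1)^2 + (x 2)^2 = 1 := by
  have h : ‖x‖ ^ 2 = 1 := by rw [hx]; norm_num
  rw [EuclideanSpace.norm_eq] at h
  rw [Real.sq_sqrt (by positivity)] at h
  simpa [Fin.sum_univ_three, Real.norm_eq_abs, sq_abs] using h

private lemma cs3 (a0 a1 a2 x0 x1 x2 : ℝ) (ha : a0^2+a1^2+a2^2 = 1)
    (hx : x0^2+x1^2+x2^2 = 1) : |a0*x0+a1*x1+a2*x2| ≤ 1 := by
  rw [abs_le]
  constructor <;> nlinarith [sq_nonneg (a0*x1-a1*x0), sq_nonneg (a0*x2-a2*x0),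
    sq_nonneg (a1*x2-a2*x1), sq_nonneg (a0*x0+a1*x1+a2*x2+1), sq_nonneg (a0*x0+a1*x1+a2*x2-1)]

private lemma D3_bound (x0 x1 x2 y0 y1 y2 z0 z1 z2 : ℝ)
    (hx : x0^2+x1^2+x2^2 = 1) (hy : y0^2+y1^2+y2^2 = 1) (hz : z0^2+z1^2+z2^2 = 1) :
    |D3 x0 x1 x2 y0 y1 y2 z0 z1 z2| ≤ 1 := by
  have hsq : (D3 x0 x1 x2 y0 y1 y2 z0 z1 z2) * (D3 x0 x1 x2 y0 y1 y2 z0 z1 z2) ≤ 1 := by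
    set c1 := x1*y2-x2*y1 with hc1
    set c2 := x2*y0-x0*y2 with hc2
    set c3 := x0*y1-x1*y0 with hc3
    have key : c1^2+c2^2+c3^2 + (x0*y0+x1*y1+x2*y2)^2 =
        (x0^2+x1^2+x2^2)*(y0^2+y1^2+y2^2) := by rw [hc1, hc2, hc3]; ring
    have hcle : c1^2+c2^2+c3^2 ≤ 1 := by
      nlinarith [sq_nonneg (x0*y0+x1*y1+x2*y2)]
    have hcs : (c1*z0+c2*z1+c3*z2)^2 ≤ (c1^2+c2^2+c3^2)*(z0^2+z1^2+z2^2) := by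
      nlinarith [sq_nonneg (c1*z1-c2*z0), sq_nonneg (c1*z2-c3*z0), sq_nonneg (c2*z2-c3*z1)]
    rw [hz] at hcs
    have hD : D3 x0 x1 x2 y0 y1 y2 z0 z1 z2 = c1*z0+c2*z1+c3*z2 := by
      rw [hc1, hc2, hc3]; simp only [D3]; ring
    rw [hD, ← sq]; linarith
  exact abs_le_one_iff_mul_self_le_one.mpr hsq

private lemma D3_tetr (a0 a1 a2 b0 b1 b2 c0 c1 c2 x0 x1 x2 : ℝ)
    (ha : a0^2+a1^2+a2^2 = 1) (hb : b0^2+b1^2+b2^2 = 1)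
    (hc : c0^2+c1^2+c2^2 = 1) (hx : x0^2+x1^2+x2^2 = 1) :
    |D3 a0 a1 a2 b0 b1 b2 c0 c1 c2| ≤
      |D3 a0 a1 a2 b0 b1 b2 x0 x1 x2| + |D3 b0 b1 b2 c0 c1 c2 x0 x1 x2| +
      |D3 a0 a1 a2 c0 c1 c2 x0 x1 x2| := by
  have hI : D3 a0 a1 a2 b0 b1 b2 c0 c1 c2 =
      D3 b0 b1 b2 c0 c1 c2 x0 x1 x2 * (a0*x0+a1*x1+a2*x2)
      + (- (D3 a0 a1 a2 c0 c1 c2 x0 x1 x2 * (b0*x0+b1*x1+b2*x2)))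
      + D3 a0 a1 a2 b0 b1 b2 x0 x1 x2 * (c0*x0+c1*x1+c2*x2) := by
    have : D3 a0 a1 a2 b0 b1 b2 c0 c1 c2 * (x0^2+x1^2+x2^2) =
        D3 b0 b1 b2 c0 c1 c2 x0 x1 x2 * (a0*x0+a1*x1+a2*x2)
        + (- (D3 a0 a1 a2 c0 c1 c2 x0 x1 x2 * (b0*x0+b1*x1+b2*x2)))
        + D3 a0 a1 a2 b0 b1 b2 x0 x1 x2 * (c0*x0+c1*x1+c2*x2) := by
      simp only [D3]; ring
    rw [hx] at this; linarith
  calc |D3 a0 a1 a2 b0 b1 b2 c0 c1 c2| ≤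
      |D3 b0 b1 b2 c0 c1 c2 x0 x1 x2 * (a0*x0+a1*x1+a2*x2)|
      + |(- (D3 a0 a1 a2 c0 c1 c2 x0 x1 x2 * (b0*x0+b1*x1+b2*x2)))|
      + |D3 a0 a1 a2 b0 b1 b2 x0 x1 x2 * (c0*x0+c1*x1+c2*x2)| := by
        rw [hI]; exact abs_add_three _ _ _
    _ ≤ |D3 a0 a1 a2 b0 b1 b2 x0 x1 x2| + |D3 b0 b1 b2 c0 c1 c2 x0 x1 x2|
        + |D3 a0 a1 a2 c0 c1 c2 x0 x1 x2| := by
        rw [abs_neg, abs_mul, abs_mul, abs_mul]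
        have h1 := cs3 a0 a1 a2 x0 x1 x2 ha hx
        have h2 := cs3 b0 b1 b2 x0 x1 x2 hb hx
        have h3 := cs3 c0 c1 c2 x0 x1 x2 hc hx
        have n1 : (0:ℝ) ≤ |D3 b0 b1 b2 c0 c1 c2 x0 x1 x2| := abs_nonneg _
        have n2 : (0:ℝ) ≤ |D3 a0 a1 a2 c0 c1 c2 x0 x1 x2| := abs_nonneg _
        have n3 : (0:ℝ) ≤ |D3 a0 a1 a2 b0 b1 b2 x0 x1 x2| := abs_nonneg _
        nlinarith [abs_nonneg (a0*x0+a1*x1+a2*x2), abs_nonneg (b0*x0+b1*x1+b2*x2),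
          abs_nonneg (c0*x0+c1*x1+c2*x2)]

private lemma D3_trans (a0 a1 a2 b0 b1 b2 c0 c1 c2 x0 x1 x2 y0 y1 y2 : ℝ)
    (ha : a0^2+a1^2+a2^2 = 1) (hb : b0^2+b1^2+b2^2 = 1)
    (hc : c0^2+c1^2+c2^2 = 1) (hx : x0^2+x1^2+x2^2 = 1) :
    |D3 a0 a1 a2 b0 b1 b2 x0 x1 x2| * |D3 c0 c1 c2 x0 x1 x2 y0 y1 y2| ≤
      |D3 a0 a1 a2 x0 x1 x2 y0 y1 y2| + |D3 b0 b1 b2 x0 x1 x2 y0 y1 y2| := by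
  have hI : D3 a0 a1 a2 b0 b1 b2 x0 x1 x2 * D3 c0 c1 c2 x0 x1 x2 y0 y1 y2 =
      D3 b0 b1 b2 x0 x1 x2 c0 c1 c2 * D3 a0 a1 a2 x0 x1 x2 y0 y1 y2
      + (- (D3 a0 a1 a2 x0 x1 x2 c0 c1 c2 * D3 b0 b1 b2 x0 x1 x2 y0 y1 y2)) := by
    simp only [D3]; ring
  have hB1 := D3_bound b0 b1 b2 x0 x1 x2 c0 c1 c2 hb hx hc
  have hB2 := D3_bound a0 a1 a2 x0 x1 x2 c0 c1 c2 ha hx hc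
  calc |D3 a0 a1 a2 b0 b1 b2 x0 x1 x2| * |D3 c0 c1 c2 x0 x1 x2 y0 y1 y2|
      = |D3 a0 a1 a2 b0 b1 b2 x0 x1 x2 * D3 c0 c1 c2 x0 x1 x2 y0 y1 y2| := (abs_mul _ _).symm
    _ ≤ |D3 b0 b1 b2 x0 x1 x2 c0 c1 c2 * D3 a0 a1 a2 x0 x1 x2 y0 y1 y2|
        + |(- (D3 a0 a1 a2 x0 x1 x2 c0 c1 c2 * D3 b0 b1 b2 x0 x1 x2 y0 y1 y2))| := by
        rw [hI]; exact abs_add_le _ _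
    _ ≤ |D3 a0 a1 a2 x0 x1 x2 y0 y1 y2| + |D3 b0 b1 b2 x0 x1 x2 y0 y1 y2| := by
        rw [abs_neg, abs_mul, abs_mul]
        nlinarith [abs_nonneg (D3 a0 a1 a2 x0 x1 x2 y0 y1 y2),
          abs_nonneg (D3 b0 b1 b2 x0 x1 x2 y0 y1 y2),
          abs_nonneg (D3 b0 b1 b2 x0 x1 x2 c0 c1 c2),
          abs_nonneg (D3 a0 a1 a2 x0 x1 x2 c0 c1 c2)]

theorem stmt_18 (d : EuclideanSpace ℝ (Fin 3) → EuclideanSpace ℝ (Fin 3) →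
      EuclideanSpace ℝ (Fin 3) → ℝ)
    (hd : ∀ x y z : EuclideanSpace ℝ (Fin 3),
      d x y z = |Matrix.det (Matrix.of ![![x 0, y 0, z 0], ![x 1, y 1, z 1], ![x 2, y 2, z 2]])|) :
    (∀ x y z : EuclideanSpace ℝ (Fin 3), ‖x‖ = 1 → ‖y‖ = 1 → ‖z‖ = 1 →
      d x y z = d y x z ∧ d x y z = d x z y) ∧
    (∀ a b c x : EuclideanSpace ℝ (Fin 3), ‖a‖ = 1 → ‖b‖ = 1 → ‖c‖ = 1 → ‖x‖ = 1 →
      d a b c ≤ d a b x + d b c x + d a c x) ∧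
    (∀ a b : EuclideanSpace ℝ (Fin 3), ‖a‖ = 1 → ‖b‖ = 1 → d a b b = 0) ∧
    (∀ x y z : EuclideanSpace ℝ (Fin 3), ‖x‖ = 1 → ‖y‖ = 1 → ‖z‖ = 1 → d x y z ≤ 1) ∧
    (∀ a b c x y : EuclideanSpace ℝ (Fin 3),
      ‖a‖ = 1 → ‖b‖ = 1 → ‖c‖ = 1 → ‖x‖ = 1 → ‖y‖ = 1 →
      d a b x * d c x y ≤ d a x y + d b x y) := by
  refine ⟨?_, ?_, ?_, ?_, ?_⟩
  · intro x y z _ _ _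
    constructor
    · rw [hd, hd, det_eq, det_eq, ← abs_neg]
      congr 1; simp only [D3]; ring
    · rw [hd, hd, det_eq, det_eq, ← abs_neg]
      congr 1; simp only [D3]; ring
  · intro a b c x ha hb hc hx
    rw [hd, hd, hd, hd, det_eq, det_eq, det_eq, det_eq]
    exact D3_tetr _ _ _ _ _ _ _ _ _ _ _ _ (norm_sq_one a ha) (norm_sq_one b hb)
      (norm_sq_one c hc) (norm_sq_one x hx)
  · intro a b _ _
    rw [hd, det_eq]
    have : D3 (a 0) (a 1) (a 2) (b 0) (b 1) (b 2) (b 0) (b 1) (b 2) = 0 := by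
      simp only [D3]; ring
    rw [this, abs_zero]
  · intro x y z hx hy hz
    rw [hd, det_eq]
    exact D3_bound _ _ _ _ _ _ _ _ _ (norm_sq_one x hx) (norm_sq_one y hy) (norm_sq_one z hz)
  · intro a b c x y ha hb hc hx _
    rw [hd, hd, hd, hd, det_eq, det_eq, det_eq, det_eq]
    exact D3_trans _ _ _ _ _ _ _ _ _ _ _ _ _ _ _ (norm_sq_one a ha) (norm_sq_one b hb)
      (norm_sq_one c hc) (norm_sq_one x hx)
end

section
/- Let n ≥ 2 and let U ⊆ ℝⁿ be a ball of diameter at most 1. For x,y,z ∈ U let α(x,y,z) denote the area of the triangle spanned by x,y,z, namely α(x,y,z) = (1/2)·√(‖y−x‖²·‖z−x‖² − ⟨y−x, z−x⟩²). Then α satisfies on U: (Sym) α is invariant under all permutations of its three arguments; (Tetr) α(a,b,c) ≤ α(a,b,x) + α(b,c,x) + α(a,c,x) for all a,b,c,x ∈ U; (Z) α(a,b,b) = 0 for all a,b ∈ U; (N) for all a ≠ b in U there exists c ∈ U with α(a,b,c) ≠ 0; (B) α(x,y,z) ≤ 1 for all x,y,z ∈ U; and (Trans) α(a,b,x)·α(c,x,y)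 ≤ α(a,x,y) + α(b,x,y) for all a,b,c,x,y ∈ U. -/
/-!
Embed `u ∧ v` in Euclidean space via its coordinates `(uᵢvⱼ - uⱼvᵢ)/√2`. By Lagrange's identity
its norm is `√(‖u‖²‖v‖² - ⟪u, v⟫²)`, so the area of a triangle is half the norm of the wedge of two
of its edge vectors. (Sym), (Z) and (Tetr) then follow from antisymmetry, `u ∧ u = 0`, and the
triangle inequality applied to a linear identity between wedges. For (Trans), decomposing `a` and
`b` along `u` and orthogonally to it gives `‖a ∧ b‖ ‖u‖ ≤ ‖b‖ ‖a ∧ u‖ + ‖a‖ ‖b ∧ u‖`; with all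
points at distance at most `1` this bounds the product of areas. For (N), move `a` slightly in a
direction orthogonal to `b - a`, which exists as `n ≥ 2`.
-/

open Filter Topology RealInnerProductSpace

section Wedge

variable {ι : Type*}

noncomputable def wedge (u v : EuclideanSpace ℝ ι) : EuclideanSpace ℝ (ι × ι) :=
  WithLp.toLp 2 fun p => (u p.1 * v p.2 - u p.2 * v p.1) / √2

@[simp]
lemma wedge_apply (u v : EuclideanSpace ℝ ι) (p : ι × ι) :
    wedge u v p = (u p.1 * v p.2 - u p.2 * v p.1) / √2 := rfl

lemma wedge_self (u : EuclideanSpace ℝ ι) : wedge u u = 0 := by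
  ext p; simp [mul_comm]

lemma wedge_swap (u v : EuclideanSpace ℝ ι) : wedge v u = -wedge u v := by
  ext p; simp only [wedge_apply, PiLp.neg_apply]; ring

lemma wedge_sub_smul_left (u v : EuclideanSpace ℝ ι) (s : ℝ) :
    wedge (u - s • v) v = wedge u v := by
  ext p; simp only [wedge_apply, PiLp.sub_apply, PiLp.smul_apply, smul_eq_mul]; ring

lemma wedge_eq_wedge_sub_smul_add (a b u : EuclideanSpace ℝ ι) (s t : ℝ) :
    wedge a b = wedge (a - s • u) b + wedge (s • u) (b - t • u) := by
  ext p
  simp only [wedge_apply, PiLp.add_apply, PiLp.sub_apply, PiLp.smul_apply, smul_eq_mul]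
  ring

lemma wedge_sub_sub_swap (x y z : EuclideanSpace ℝ ι) :
    wedge (x - y) (z - y) = -wedge (y - x) (z - x) := by
  ext p; simp only [wedge_apply, PiLp.sub_apply, PiLp.neg_apply]; ring

lemma wedge_sub_eq_add_sub (a b c x : EuclideanSpace ℝ ι) :
    wedge (b - a) (c - a) =
      wedge (b - a) (x - a) + wedge (c - b) (x - b) - wedge (c - a) (x - a) := by
  ext p
  simp only [wedge_apply, PiLp.add_apply, PiLp.sub_apply]
  ring

variable [Fintype ι]

lemma norm_wedge_sq (u v : EuclideanSpace ℝ ι) :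
    ‖wedge u v‖ ^ 2 = ‖u‖ ^ 2 * ‖v‖ ^ 2 - ⟪u, v⟫ ^ 2 := by
  simp only [EuclideanSpace.norm_sq_eq, Real.norm_eq_abs, sq_abs, Fintype.sum_prod_type,
    wedge_apply, div_pow, Real.sq_sqrt zero_le_two, PiLp.inner_apply, RCLike.inner_apply,
    conj_trivial]
  set g : ι → ι → ℝ := fun i j => u i ^ 2 * v j ^ 2
  set h : ι → ι → ℝ := fun i j => u i * v i * (u j * v j)
  calc ∑ i, ∑ j, (u i * v j - u j * v i) ^ 2 / 2
      = ∑ i, ∑ j, (g i j / 2 + g j i / 2 - h i j) := by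
        congr! 2 with i _ j _; simp only [g, h]; ring
    _ = ∑ i, ∑ j, g i j - ∑ i, ∑ j, h i j := by
        simp only [Finset.sum_add_distrib, Finset.sum_sub_distrib, ← Finset.sum_div]
        rw [Finset.sum_comm (f := fun i j => g j i)]
        ring
    _ = (∑ i, u i ^ 2) * ∑ i, v i ^ 2 - (∑ i, v i * u i) ^ 2 := by
        simp only [g, h, sq (Finset.sum _ _), Finset.sum_mul_sum, mul_comm (v _) (u _)]

lemma norm_wedge (u v : EuclideanSpace ℝ ι) :
    ‖wedge u v‖ = √(‖u‖ ^ 2 * ‖v‖ ^ 2 - ⟪u, v⟫ ^ 2) := by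
  rw [← norm_wedge_sq, Real.sqrt_sq (norm_nonneg _)]

lemma norm_wedge_le (u v : EuclideanSpace ℝ ι) : ‖wedge u v‖ ≤ ‖u‖ * ‖v‖ := by
  rw [norm_wedge, Real.sqrt_le_left (by positivity), mul_pow]
  nlinarith [sq_nonneg ⟪u, v⟫]

lemma norm_wedge_of_inner_eq_zero {u v : EuclideanSpace ℝ ι} (h : ⟪u, v⟫ = 0) :
    ‖wedge u v‖ = ‖u‖ * ‖v‖ := by
  rw [norm_wedge, h, zero_pow two_ne_zero, sub_zero, ← mul_pow, Real.sqrt_sq (by positivity)]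

lemma norm_wedge_mul_norm_le (a b u : EuclideanSpace ℝ ι) :
    ‖wedge a b‖ * ‖u‖ ≤ ‖b‖ * ‖wedge a u‖ + ‖a‖ * ‖wedge b u‖ := by
  rcases eq_or_ne u 0 with rfl | hu
  · simp only [norm_zero, mul_zero]; positivity
  set s := ⟪u, a⟫ / ‖u‖ ^ 2
  set t := ⟪u, b⟫ / ‖u‖ ^ 2
  have orth : ∀ c : EuclideanSpace ℝ ι, ⟪c - (⟪u, c⟫ / ‖u‖ ^ 2) • u, u⟫ = 0 := fun c => by
    rw [inner_sub_left, real_inner_smul_left, real_inner_self_eq_norm_sq, real_inner_comm]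
    field_simp; ring
  have ha : ‖wedge a u‖ = ‖a - s • u‖ * ‖u‖ := by
    rw [← wedge_sub_smul_left a u s, norm_wedge_of_inner_eq_zero (orth a)]
  have hb : ‖wedge b u‖ = ‖b - t • u‖ * ‖u‖ := by
    rw [← wedge_sub_smul_left b u t, norm_wedge_of_inner_eq_zero (orth b)]
  have hs : ‖s • u‖ ≤ ‖a‖ := by
    simpa [Submodule.starProjection_singleton] using (ℝ ∙ u).norm_starProjection_apply_le a
  calc ‖wedge a b‖ * ‖u‖
      ≤ (‖wedge (a - s • u) b‖ + ‖wedge (s • u) (b - t • u)‖) * ‖u‖ := by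
        rw [wedge_eq_wedge_sub_smul_add a b u s t]; gcongr; exact norm_add_le _ _
    _ ≤ (‖a - s • u‖ * ‖b‖ + ‖a‖ * ‖b - t • u‖) * ‖u‖ := by
        gcongr
        · exact norm_wedge_le _ _
        · exact (norm_wedge_le _ _).trans (by gcongr)
    _ = ‖b‖ * ‖wedge a u‖ + ‖a‖ * ‖wedge b u‖ := by rw [ha, hb]; ring

noncomputable def triangleArea (x y z : EuclideanSpace ℝ ι) : ℝ := ‖wedge (y - x) (z - x)‖ / 2

lemma triangleArea_eq_sqrt (x y z : EuclideanSpace ℝ ι) :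
    triangleArea x y z = 1 / 2 * √(‖y - x‖ ^ 2 * ‖z - x‖ ^ 2 - ⟪y - x, z - x⟫ ^ 2) := by
  rw [triangleArea, norm_wedge]; ring

lemma triangleArea_nonneg (x y z : EuclideanSpace ℝ ι) : 0 ≤ triangleArea x y z := by
  unfold triangleArea; positivity

lemma triangleArea_swap₁₂ (x y z : EuclideanSpace ℝ ι) :
    triangleArea y x z = triangleArea x y z := by
  rw [triangleArea, triangleArea, wedge_sub_sub_swap, norm_neg]

lemma triangleArea_swap₂₃ (x y z : EuclideanSpace ℝ ι) :
    triangleArea x z y = triangleArea x y z := by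
  rw [triangleArea, triangleArea, wedge_swap, norm_neg]

lemma triangleArea_rotate (x y z : EuclideanSpace ℝ ι) :
    triangleArea y z x = triangleArea x y z := by
  rw [triangleArea_swap₂₃ y x z, triangleArea_swap₁₂]

lemma triangleArea_self₂₃ (x y : EuclideanSpace ℝ ι) : triangleArea x y y = 0 := by
  simp [triangleArea, wedge_self]

lemma triangleArea_le_add (a b c x : EuclideanSpace ℝ ι) :
    triangleArea a b c ≤ triangleArea a b x + triangleArea b c x + triangleArea a c x := by
  simp only [triangleArea, ← add_div]
  gcongr
  rw [wedge_sub_eq_add_sub a b c x]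
  exact (norm_sub_le _ _).trans (by gcongr; exact norm_add_le _ _)

lemma triangleArea_le_mul (x y z : EuclideanSpace ℝ ι) :
    triangleArea x y z ≤ ‖y - x‖ * ‖z - x‖ / 2 := by
  unfold triangleArea; gcongr; exact norm_wedge_le _ _

lemma triangleArea_mul_triangleArea_le {a b c x : EuclideanSpace ℝ ι} (y : EuclideanSpace ℝ ι)
    (ha : ‖a - x‖ ≤ 1) (hb : ‖b - x‖ ≤ 1) (hc : ‖c - x‖ ≤ 1) :
    triangleArea a b x * triangleArea c x y ≤ triangleArea a x y + triangleArea b x y := by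
  rw [triangleArea_rotate x a b, triangleArea_swap₁₂ x c y, triangleArea_swap₁₂ x a y,
    triangleArea_swap₁₂ x b y]
  have hcxy : triangleArea x c y ≤ ‖y - x‖ / 2 :=
    (triangleArea_le_mul x c y).trans (by gcongr; nlinarith [norm_nonneg (y - x)])
  have key := norm_wedge_mul_norm_le (a - x) (b - x) (y - x)
  have hA : ‖b - x‖ * ‖wedge (a - x) (y - x)‖ ≤ ‖wedge (a - x) (y - x)‖ :=
    mul_le_of_le_one_left (norm_nonneg _) hb
  have hB : ‖a - x‖ * ‖wedge (b - x) (y - x)‖ ≤ ‖wedge (b - x) (y - x)‖ :=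
    mul_le_of_le_one_left (norm_nonneg _) ha
  calc triangleArea x a b * triangleArea x c y
      ≤ triangleArea x a b * (‖y - x‖ / 2) :=
        mul_le_mul_of_nonneg_left hcxy (triangleArea_nonneg _ _ _)
    _ ≤ (triangleArea x a y + triangleArea x b y) / 2 := by
        unfold triangleArea; nlinarith
    _ ≤ triangleArea x a y + triangleArea x b y := by
        linarith [triangleArea_nonneg x a y, triangleArea_nonneg x b y]

lemma exists_ne_zero_inner_eq_zero {E : Type*} [NormedAddCommGroup E] [InnerProductSpace ℝ E]
    [FiniteDimensional ℝ E] (hE : 2 ≤ Module.finrank ℝ E) (v : E) : ∃ w ≠ 0, ⟪v, w⟫ = 0 := by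
  have hspan : Module.finrank ℝ (ℝ ∙ v) ≤ 1 := by
    simpa using finrank_span_le_card ({v} : Set E)
  have horth : (ℝ ∙ v)ᗮ ≠ ⊥ := by
    intro h
    have := (ℝ ∙ v).finrank_add_finrank_orthogonal
    rw [h, finrank_bot] at this
    omega
  obtain ⟨w, hw, hw0⟩ := Submodule.exists_mem_ne_zero_of_ne_bot horth
  exact ⟨w, hw0, Submodule.inner_right_of_mem_orthogonal (Submodule.mem_span_singleton_self v) hw⟩

lemma exists_triangleArea_ne_zero (hι : 2 ≤ Fintype.card ι) {U : Set (EuclideanSpace ℝ ι)}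
    (hU : IsOpen U) {a b : EuclideanSpace ℝ ι} (ha : a ∈ U) (hab : a ≠ b) :
    ∃ c ∈ U, triangleArea a b c ≠ 0 := by
  obtain ⟨w, hw0, hw⟩ := exists_ne_zero_inner_eq_zero (by rwa [finrank_euclideanSpace]) (b - a)
  have hline : Tendsto (fun t : ℝ => a + t • w) (𝓝 0) (𝓝 a) := by
    simpa using ((tendsto_id (x := 𝓝 (0 : ℝ))).smul_const w).const_add a
  obtain ⟨t, htU, ht0⟩ := ((hline.eventually (hU.mem_nhds ha)).filter_mono nhdsWithin_le_nhds
    |>.and (self_mem_nhdsWithin (s := {0}ᶜ))).exists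
  refine ⟨a + t • w, htU, ?_⟩
  rw [triangleArea, add_sub_cancel_left,
    norm_wedge_of_inner_eq_zero (by rw [real_inner_smul_right, hw, mul_zero])]
  have : b - a ≠ 0 := sub_ne_zero.mpr hab.symm
  have : t • w ≠ 0 := smul_ne_zero ht0 hw0
  positivity

end Wedge

theorem stmt_19 (n : ℕ) (hn : 2 ≤ n)
    (c : EuclideanSpace ℝ (Fin n)) (r : ℝ) (hr : 2 * r ≤ 1)
    (U : Set (EuclideanSpace ℝ (Fin n))) (hU : U = Metric.ball c r)
    (α : EuclideanSpace ℝ (Fin n) → EuclideanSpace ℝ (Fin n) →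
      EuclideanSpace ℝ (Fin n) → ℝ)
    (hα : ∀ x y z : EuclideanSpace ℝ (Fin n),
      α x y z = (1 / 2) * Real.sqrt (‖y - x‖ ^ 2 * ‖z - x‖ ^ 2 -
        (inner ℝ (y - x) (z - x) : ℝ) ^ 2)) :
    (∀ x ∈ U, ∀ y ∈ U, ∀ z ∈ U, α x y z = α y x z ∧ α x y z = α x z y) ∧
    (∀ a ∈ U, ∀ b ∈ U, ∀ c' ∈ U, ∀ x ∈ U,
      α a b c' ≤ α a b x + α b c' x + α a c' x) ∧
    (∀ a ∈ U, ∀ b ∈ U, α a b b = 0) ∧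
    (∀ a ∈ U, ∀ b ∈ U, a ≠ b → ∃ c' ∈ U, α a b c' ≠ 0) ∧
    (∀ x ∈ U, ∀ y ∈ U, ∀ z ∈ U, α x y z ≤ 1) ∧
    (∀ a ∈ U, ∀ b ∈ U, ∀ c' ∈ U, ∀ x ∈ U, ∀ y ∈ U,
      α a b x * α c' x y ≤ α a x y + α b x y) := by
  have hα' : α = triangleArea := by
    ext x y z; rw [hα, triangleArea_eq_sqrt]
  subst hα' hU
  have hdiam : ∀ p ∈ Metric.ball c r, ∀ q ∈ Metric.ball c r, ‖p - q‖ ≤ 1 := by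
    intro p hp q hq
    rw [← dist_eq_norm]
    linarith [dist_triangle_right p q c, Metric.mem_ball.mp hp, Metric.mem_ball.mp hq]
  refine ⟨fun x _ y _ z _ => ⟨(triangleArea_swap₁₂ x y z).symm, (triangleArea_swap₂₃ x y z).symm⟩,
    fun a _ b _ c' _ x _ => triangleArea_le_add a b c' x,
    fun a _ b _ => triangleArea_self₂₃ a b,
    fun a ha b _ hab => exists_triangleArea_ne_zero (by simpa using hn) Metric.isOpen_ball ha hab,
    fun x hx y hy z hz => ?_,
    fun a ha b hb c' hc x hx y _ =>
      triangleArea_mul_triangleArea_le y (hdiam a ha x hx) (hdiam b hb x hx) (hdiam c' hc x hx)⟩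
  have hyx := hdiam y hy x hx
  have hzx := hdiam z hz x hx
  calc triangleArea x y z ≤ ‖y - x‖ * ‖z - x‖ / 2 := triangleArea_le_mul x y z
    _ ≤ 1 := by nlinarith [norm_nonneg (y - x), norm_nonneg (z - x)]
end
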